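/- arXiv:1508.02007 — 7 statements merged into one kernel-verified Lean document; each statement's English description precedes it below -/
import Mathlib

section
/- If integers j, k, p satisfy 2 p^2 = j^2 + j k + k^2, then j, k and p are all even. -/
/-- Descent step: if `2 p² = j² + j k + k²` then `j`, `k` and `p` are all even. -/
theorem descent_step (j k p : ℤ) (h : 2 * p ^ 2 = j ^ 2 + j * k + k ^ 2) :
    Even j ∧ Even k ∧ Even p := by
  have hE : Even (j ^ 2 + j * k + k ^ 2) := ⟨p ^ 2, by linarith⟩
  have hjk : Even j ∧ Even k := by
    have := hE
    simp [Int.even_add, Int.even_mul, Int.even_pow] at this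
    tauto
  obtain ⟨⟨a, ha⟩, ⟨b, hb⟩⟩ := hjk
  refine ⟨⟨a, ha⟩, ⟨b, hb⟩, ?_⟩
  have hp2 : Even (p ^ 2) := by
    refine ⟨a ^ 2 + a * b + b ^ 2, ?_⟩
    subst ha hb
    have h2 : 2 * p ^ 2 = 2 * (a ^ 2 + a * b + b ^ 2 + (a ^ 2 + a * b + b ^ 2)) := by
      linear_combination h
    exact mul_left_cancel₀ two_ne_zero h2
  exact (Int.even_pow.mp hp2).1
end

section
/- Let S be a finite subset of the nonzero integers which is symmetric (j ∈ S implies −j ∈ S). Then there exist no integers j1, j2, j3 ∈ S and j4 ∈ ℤ \ S such that j1 + j2 + j3 + j4 = 0 and j1^3 + j2^3 + j3^3 + j4^3 = 0. -/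
/-- No quartic resonances with exactly three indices in a symmetric set `S`
of nonzero integers and one index outside `S`. -/
theorem no_three_one_resonance (S : Finset ℤ)
    (h0 : ∀ j ∈ S, j ≠ 0) (hsym : ∀ j ∈ S, -j ∈ S) :
    ¬ ∃ (j1 j2 j3 j4 : ℤ), j1 ∈ S ∧ j2 ∈ S ∧ j3 ∈ S ∧ j4 ∉ S ∧
      j1 + j2 + j3 + j4 = 0 ∧ j1 ^ 3 + j2 ^ 3 + j3 ^ 3 + j4 ^ 3 = 0 := by
  rintro ⟨j1, j2, j3, j4, h1, h2, h3, h4, hs, hc⟩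
  have h4eq : j4 = -(j1 + j2 + j3) := by linarith
  have hfac : -3 * ((j1 + j2) * ((j1 + j3) * (j2 + j3))) = 0 := by
    subst h4eq; ring_nf; ring_nf at hc; linarith
  have : (j1 + j2) * ((j1 + j3) * (j2 + j3)) = 0 := by linarith
  rcases mul_eq_zero.1 this with h | h
  · exact h4 (by rw [h4eq, show -(j1 + j2 + j3) = -j3 by linarith]; exact hsym _ h3)
  · rcases mul_eq_zero.1 h with h | h
    · exact h4 (by rw [h4eq, show -(j1 + j2 + j3) = -j2 by linarith]; exact hsym _ h2)
    · exact h4 (by rw [h4eq, show -(j1 + j2 + j3) = -j1 by linarith]; exact hsym _ h1)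
end

section
/- Let S be a symmetric subset of the nonzero integers (j ∈ S implies −j ∈ S). Suppose j1, j2 ∈ S and j, j' are nonzero integers not belonging to S, with j1 + j2 + j' − j = 0 and j1^3 + j2^3 + j'^3 − j^3 = 0. Then j1 + j2 = 0 and j = j'. -/
/-- Lemma 8.4 (lem:bnf 1): the only resonances with two indices in the
symmetric set `S` and two normal indices `j, j' ∉ S` are the trivial ones. -/
theorem bnf_resonance (S : Set ℤ) (hsym : ∀ j ∈ S, -j ∈ S)
    (j1 j2 j j' : ℤ) (hj1 : j1 ∈ S) (hj2 : j2 ∈ S)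
    (hj0 : j ≠ 0) (hj'0 : j' ≠ 0) (hjS : j ∉ S) (hj'S : j' ∉ S)
    (hsum : j1 + j2 + j' - j = 0)
    (hcube : j1 ^ 3 + j2 ^ 3 + j' ^ 3 - j ^ 3 = 0) :
    j1 + j2 = 0 ∧ j = j' := by
  have hj : j = j1 + j2 + j' := by linarith
  have h1 : j1 + j' ≠ 0 := fun h => hj'S (by
    have : j' = -j1 := by linarith
    exact this ▸ hsym j1 hj1)
  have h2 : j2 + j' ≠ 0 := fun h => hj'S (by
    have : j' = -j2 := by linarith
    exact this ▸ hsym j2 hj2)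
  rw [hj] at hcube
  have hfac3 : (3 : ℤ) * ((j1 + j2) * ((j1 + j') * (j2 + j'))) = 0 := by
    linear_combination -hcube
  have hfac : (j1 + j2) * ((j1 + j') * (j2 + j')) = 0 := by
    rcases mul_eq_zero.mp hfac3 with h | h
    · exact absurd h (by norm_num)
    · exact h
  have h12 : j1 + j2 = 0 := by
    rcases mul_eq_zero.mp hfac with h | h
    · exact h
    · rcases mul_eq_zero.mp h with h | h
      · exact absurd h h1
      · exact absurd h h2
  exact ⟨h12, by linarith⟩
end

section
/- Let S be a finite symmetric subset of the nonzero integers (j ∈ S implies −j ∈ S), and let u : ℤ → ℂ satisfy u(−j) = conjugate of u(j) for all j. Then the sum of u(j1) u(j2) u(j3) u(j4) over all quadruples (j1, j2, j3, j4) ∈ S^4 satisfying j1 + j2 + j3 + j4 = 0 and j1^3 + j2^3 + j3^3 + j4^3 = 0 equals 3 (Σ_{j ∈ S} |u(j)|^2)^2 − 3 Σ_{j ∈ S} |u(j)|^4. -/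
open Finset

/-- Weak Birkhoff normal form computation: for a finite symmetric set `S` of
nonzero integers and a conjugate-symmetric sequence `u`, the resonant quartic
sum equals `3 (Σ_{j∈S} |u j|²)² - 3 Σ_{j∈S} |u j|⁴`. -/
theorem resonant_quartic_sum (S : Finset ℤ)
    (h0 : ∀ j ∈ S, j ≠ 0) (hsym : ∀ j ∈ S, -j ∈ S)
    (u : ℤ → ℂ) (hu : ∀ j : ℤ, u (-j) = star (u j)) :
    ∑ q ∈ Finset.filter
        (fun q : (ℤ × ℤ) × (ℤ × ℤ) =>
          q.1.1 + q.1.2 + q.2.1 + q.2.2 = 0 ∧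
          q.1.1 ^ 3 + q.1.2 ^ 3 + q.2.1 ^ 3 + q.2.2 ^ 3 = 0)
        ((S ×ˢ S) ×ˢ (S ×ˢ S)),
        u q.1.1 * u q.1.2 * u q.2.1 * u q.2.2
      = ((3 * (∑ j ∈ S, ‖u j‖ ^ 2) ^ 2
          - 3 * ∑ j ∈ S, ‖u j‖ ^ 4 : ℝ) : ℂ) := by
  classical
  set f : (ℤ × ℤ) × (ℤ × ℤ) → ℂ := fun q => u q.1.1 * u q.1.2 * u q.2.1 * u q.2.2 with hf
  set P4 : Finset ((ℤ × ℤ) × (ℤ × ℤ)) := (S ×ˢ S) ×ˢ (S ×ˢ S) with hP4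
  set A := P4.filter (fun q => q.1.2 = -q.1.1 ∧ q.2.2 = -q.2.1) with hA
  set B := P4.filter (fun q => q.2.1 = -q.1.1 ∧ q.2.2 = -q.1.2) with hB
  set C := P4.filter (fun q => q.2.2 = -q.1.1 ∧ q.2.1 = -q.1.2) with hC
  set g : ℤ → ℂ := fun j => ((Complex.normSq (u j) : ℝ) : ℂ) with hg
  have hgj : ∀ a : ℤ, u a * u (-a) = g a := by
    intro a
    rw [hu a, hg]
    exact Complex.mul_conj (u a)
  -- the resonant set is the union of the three pairing sets
  have hT : P4.filter
      (fun q : (ℤ × ℤ) × (ℤ × ℤ) =>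
        q.1.1 + q.1.2 + q.2.1 + q.2.2 = 0 ∧
        q.1.1 ^ 3 + q.1.2 ^ 3 + q.2.1 ^ 3 + q.2.2 ^ 3 = 0) = A ∪ B ∪ C := by
    ext q
    obtain ⟨⟨a, b⟩, ⟨c, d⟩⟩ := q
    simp only [hA, hB, hC, hP4, mem_union, mem_filter, mem_product]
    constructor
    · rintro ⟨hq, hs, hcube⟩
      have h3 : (3 : ℤ) * ((a + b) * ((a + c) * (a + d))) = 0 := by
        obtain rfl : d = -(a + b + c) := by omega
        linear_combination hcube
      have key : (a + b) * ((a + c) * (a + d)) = 0 := by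
        rcases mul_eq_zero.mp h3 with h | h
        · norm_num at h
        · exact h
      rcases mul_eq_zero.mp key with h | h'
      · exact Or.inl (Or.inl ⟨hq, by omega, by omega⟩)
      · rcases mul_eq_zero.mp h' with h | h
        · exact Or.inl (Or.inr ⟨hq, by omega, by omega⟩)
        · exact Or.inr ⟨hq, by omega, by omega⟩
    · rintro ((⟨hq, h1, h2⟩ | ⟨hq, h1, h2⟩) | ⟨hq, h1, h2⟩) <;>
        exact ⟨hq, by subst h1; subst h2; ring, by subst h1; subst h2; ring⟩
  rw [hT]
  -- inclusion-exclusion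
  have e1 : ∑ q ∈ (A ∪ B) ∪ C, f q + ∑ q ∈ (A ∪ B) ∩ C, f q
      = ∑ q ∈ A ∪ B, f q + ∑ q ∈ C, f q := sum_union_inter
  have e2 : ∑ q ∈ A ∪ B, f q + ∑ q ∈ A ∩ B, f q = ∑ q ∈ A, f q + ∑ q ∈ B, f q :=
    sum_union_inter
  have hdistrib : (A ∪ B) ∩ C = (A ∩ C) ∪ (B ∩ C) := union_inter_distrib_right A B C
  have hdisj : Disjoint (A ∩ C) (B ∩ C) := by
    rw [Finset.disjoint_left]
    rintro ⟨⟨a, b⟩, ⟨c, d⟩⟩ hac hbc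
    simp only [hA, hB, hC, hP4, mem_inter, mem_filter, mem_product] at hac hbc
    have ha : a ∈ S := hac.1.1.1.1
    have := h0 a ha
    omega
  have e3 : ∑ q ∈ (A ∪ B) ∩ C, f q = ∑ q ∈ A ∩ C, f q + ∑ q ∈ B ∩ C, f q := by
    rw [hdistrib, sum_union hdisj]
  have hprod : ∑ p ∈ S ×ˢ S, g p.1 * g p.2 = (∑ j ∈ S, g j) * (∑ j ∈ S, g j) := by
    rw [Finset.sum_product, ← Finset.sum_mul_sum]
  -- evaluate the three pairing sums
  have hAsum : ∑ q ∈ A, f q = (∑ j ∈ S, g j) * (∑ j ∈ S, g j) := by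
    rw [← hprod]
    refine Finset.sum_nbij' (fun q => (q.1.1, q.2.1))
      (fun p => ((p.1, -p.1), (p.2, -p.2))) ?_ ?_ ?_ ?_ ?_
    · rintro ⟨⟨a, b⟩, ⟨c, d⟩⟩ hq
      simp only [hA, hP4, mem_filter, mem_product] at hq
      exact Finset.mem_product.mpr ⟨hq.1.1.1, hq.1.2.1⟩
    · rintro ⟨a, c⟩ hp
      rw [Finset.mem_product] at hp
      simp only [hA, hP4, mem_filter, mem_product]
      refine ⟨⟨⟨hp.1, hsym a hp.1⟩, hp.2, hsym c hp.2⟩, ?_, ?_⟩ <;>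
        (first | trivial | omega)
    · rintro ⟨⟨a, b⟩, ⟨c, d⟩⟩ hq
      simp only [hA, hP4, mem_filter, mem_product] at hq
      simp [hq.2.1, hq.2.2]
    · rintro ⟨a, c⟩ _; rfl
    · rintro ⟨⟨a, b⟩, ⟨c, d⟩⟩ hq
      simp only [hA, hP4, mem_filter, mem_product] at hq
      obtain ⟨-, h1, h2⟩ := hq
      simp only [hf, h1, h2]
      rw [show u a * u (-a) * u c * u (-c) = (u a * u (-a)) * (u c * u (-c)) by ring,
        hgj, hgj]
  have hBsum : ∑ q ∈ B, f q = (∑ j ∈ S, g j) * (∑ j ∈ S, g j) := by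
    rw [← hprod]
    refine Finset.sum_nbij' (fun q => (q.1.1, q.1.2))
      (fun p => ((p.1, p.2), (-p.1, -p.2))) ?_ ?_ ?_ ?_ ?_
    · rintro ⟨⟨a, b⟩, ⟨c, d⟩⟩ hq
      simp only [hB, hP4, mem_filter, mem_product] at hq
      exact Finset.mem_product.mpr ⟨hq.1.1.1, hq.1.1.2⟩
    · rintro ⟨a, b⟩ hp
      rw [Finset.mem_product] at hp
      simp only [hB, hP4, mem_filter, mem_product]
      refine ⟨⟨⟨hp.1, hp.2⟩, hsym a hp.1, hsym b hp.2⟩, ?_, ?_⟩ <;>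
        (first | trivial | omega)
    · rintro ⟨⟨a, b⟩, ⟨c, d⟩⟩ hq
      simp only [hB, hP4, mem_filter, mem_product] at hq
      simp [hq.2.1, hq.2.2]
    · rintro ⟨a, b⟩ _; rfl
    · rintro ⟨⟨a, b⟩, ⟨c, d⟩⟩ hq
      simp only [hB, hP4, mem_filter, mem_product] at hq
      obtain ⟨-, h1, h2⟩ := hq
      simp only [hf, h1, h2]
      rw [show u a * u b * u (-a) * u (-b) = (u a * u (-a)) * (u b * u (-b)) by ring,
        hgj, hgj]
  have hCsum : ∑ q ∈ C, f q = (∑ j ∈ S, g j) * (∑ j ∈ S, g j) := by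
    rw [← hprod]
    refine Finset.sum_nbij' (fun q => (q.1.1, q.1.2))
      (fun p => ((p.1, p.2), (-p.2, -p.1))) ?_ ?_ ?_ ?_ ?_
    · rintro ⟨⟨a, b⟩, ⟨c, d⟩⟩ hq
      simp only [hC, hP4, mem_filter, mem_product] at hq
      exact Finset.mem_product.mpr ⟨hq.1.1.1, hq.1.1.2⟩
    · rintro ⟨a, b⟩ hp
      rw [Finset.mem_product] at hp
      simp only [hC, hP4, mem_filter, mem_product]
      refine ⟨⟨⟨hp.1, hp.2⟩, hsym b hp.2, hsym a hp.1⟩, ?_, ?_⟩ <;>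
        (first | trivial | omega)
    · rintro ⟨⟨a, b⟩, ⟨c, d⟩⟩ hq
      simp only [hC, hP4, mem_filter, mem_product] at hq
      simp [hq.2.1, hq.2.2]
    · rintro ⟨a, b⟩ _; rfl
    · rintro ⟨⟨a, b⟩, ⟨c, d⟩⟩ hq
      simp only [hC, hP4, mem_filter, mem_product] at hq
      obtain ⟨-, h1, h2⟩ := hq
      simp only [hf, h1, h2]
      rw [show u a * u b * u (-b) * u (-a) = (u a * u (-a)) * (u b * u (-b)) by ring,
        hgj, hgj]
  -- evaluate the three pairwise intersection sums
  have hABsum : ∑ q ∈ A ∩ B, f q = ∑ j ∈ S, g j ^ 2 := by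
    refine Finset.sum_nbij' (fun q => q.1.1) (fun a => ((a, -a), (-a, a))) ?_ ?_ ?_ ?_ ?_
    · rintro ⟨⟨a, b⟩, ⟨c, d⟩⟩ hq
      simp only [hA, hB, hP4, mem_inter, mem_filter, mem_product] at hq
      exact hq.1.1.1.1
    · intro a ha
      simp only [hA, hB, hP4, mem_inter, mem_filter, mem_product]
      refine ⟨⟨⟨⟨ha, hsym a ha⟩, hsym a ha, ha⟩, ?_, ?_⟩,
        ⟨⟨ha, hsym a ha⟩, hsym a ha, ha⟩, ?_, ?_⟩ <;>
        (first | trivial | omega)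
    · rintro ⟨⟨a, b⟩, ⟨c, d⟩⟩ hq
      simp only [hA, hB, hP4, mem_inter, mem_filter, mem_product] at hq
      obtain ⟨⟨-, h1, h2⟩, -, h3, h4⟩ := hq
      simp only [Prod.mk.injEq]
      refine ⟨⟨?_, ?_⟩, ?_, ?_⟩ <;> (first | trivial | rfl | omega)
    · intro a _; rfl
    · rintro ⟨⟨a, b⟩, ⟨c, d⟩⟩ hq
      simp only [hA, hB, hP4, mem_inter, mem_filter, mem_product] at hq
      obtain ⟨⟨-, h1, h2⟩, -, h3, h4⟩ := hq
      have hb : b = -a := h1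
      have hc : c = -a := h3
      have hd : d = a := by omega
      simp only [hf, hb, hc, hd]
      rw [show u a * u (-a) * u (-a) * u a = (u a * u (-a)) * (u a * u (-a)) by ring, hgj]
      ring
  have hACsum : ∑ q ∈ A ∩ C, f q = ∑ j ∈ S, g j ^ 2 := by
    refine Finset.sum_nbij' (fun q => q.1.1) (fun a => ((a, -a), (a, -a))) ?_ ?_ ?_ ?_ ?_
    · rintro ⟨⟨a, b⟩, ⟨c, d⟩⟩ hq
      simp only [hA, hC, hP4, mem_inter, mem_filter, mem_product] at hq
      exact hq.1.1.1.1
    · intro a ha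
      simp only [hA, hC, hP4, mem_inter, mem_filter, mem_product]
      refine ⟨⟨⟨⟨ha, hsym a ha⟩, ha, hsym a ha⟩, ?_, ?_⟩,
        ⟨⟨ha, hsym a ha⟩, ha, hsym a ha⟩, ?_, ?_⟩ <;>
        (first | trivial | omega)
    · rintro ⟨⟨a, b⟩, ⟨c, d⟩⟩ hq
      simp only [hA, hC, hP4, mem_inter, mem_filter, mem_product] at hq
      obtain ⟨⟨-, h1, h2⟩, -, h3, h4⟩ := hq
      simp only [Prod.mk.injEq]
      refine ⟨⟨?_, ?_⟩, ?_, ?_⟩ <;> (first | trivial | rfl | omega)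
    · intro a _; rfl
    · rintro ⟨⟨a, b⟩, ⟨c, d⟩⟩ hq
      simp only [hA, hC, hP4, mem_inter, mem_filter, mem_product] at hq
      obtain ⟨⟨-, h1, h2⟩, -, h3, h4⟩ := hq
      have hb : b = -a := h1
      have hc : c = a := by omega
      have hd : d = -a := by omega
      simp only [hf, hb, hc, hd]
      rw [show u a * u (-a) * u a * u (-a) = (u a * u (-a)) * (u a * u (-a)) by ring, hgj]
      ring
  have hBCsum : ∑ q ∈ B ∩ C, f q = ∑ j ∈ S, g j ^ 2 := by
    refine Finset.sum_nbij' (fun q => q.1.1) (fun a => ((a, a), (-a, -a))) ?_ ?_ ?_ ?_ ?_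
    · rintro ⟨⟨a, b⟩, ⟨c, d⟩⟩ hq
      simp only [hB, hC, hP4, mem_inter, mem_filter, mem_product] at hq
      exact hq.1.1.1.1
    · intro a ha
      simp only [hB, hC, hP4, mem_inter, mem_filter, mem_product]
      refine ⟨⟨⟨⟨ha, ha⟩, hsym a ha, hsym a ha⟩, ?_, ?_⟩,
        ⟨⟨ha, ha⟩, hsym a ha, hsym a ha⟩, ?_, ?_⟩ <;>
        (first | trivial | omega)
    · rintro ⟨⟨a, b⟩, ⟨c, d⟩⟩ hq
      simp only [hB, hC, hP4, mem_inter, mem_filter, mem_product] at hq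
      obtain ⟨⟨-, h1, h2⟩, -, h3, h4⟩ := hq
      simp only [Prod.mk.injEq]
      refine ⟨⟨?_, ?_⟩, ?_, ?_⟩ <;> (first | trivial | rfl | omega)
    · intro a _; rfl
    · rintro ⟨⟨a, b⟩, ⟨c, d⟩⟩ hq
      simp only [hB, hC, hP4, mem_inter, mem_filter, mem_product] at hq
      obtain ⟨⟨-, h1, h2⟩, -, h3, h4⟩ := hq
      have hb : b = a := by omega
      have hc : c = -a := h1
      have hd : d = -a := by omega
      simp only [hf, hb, hc, hd]
      rw [show u a * u a * u (-a) * u (-a) = (u a * u (-a)) * (u a * u (-a)) by ring, hgj]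
      ring
  -- assemble
  have main : ∑ q ∈ (A ∪ B) ∪ C, f q
      = 3 * ((∑ j ∈ S, g j) * (∑ j ∈ S, g j)) - 3 * ∑ j ∈ S, g j ^ 2 := by
    rw [e3, hCsum, hACsum, hBCsum] at e1
    rw [hAsum, hBsum, hABsum] at e2
    linear_combination e1 + e2
  rw [main, hg]
  have habs2 : ∀ j : ℤ, ((Complex.normSq (u j) : ℝ) : ℂ) = ((‖u j‖ ^ 2 : ℝ) : ℂ) := by
    intro j; rw [Complex.sq_norm]
  simp only [habs2]
  push_cast
  simp only [show ∀ z : ℂ, (z ^ 2) ^ 2 = z ^ 4 from fun z => by ring]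
  ring
end

section
/- Let ν ≥ 1, ς ∈ {+1, −1}, let j̄_1, …, j̄_ν be distinct positive integers, D = diag(j̄_1, …, j̄_ν), U the ν × ν all-ones matrix, 𝔸 = 3ς D(I − 2U), and ω̄ = (j̄_1^3, …, j̄_ν^3) ∈ ℝ^ν. Then the sum of the components of 𝔸^{−1} ω̄ equals −(1/(3ς(2ν−1))) Σ_{i=1}^{ν} j̄_i^2, and consequently for all integers j, k: j^3 − k^3 + 6ς (j − k) (1⃗ · 𝔸^{−1} ω̄) = (j − k) ( j^2 + jk + k^2 − (2/(2ν−1)) Σ_{i=1}^{ν} j̄_i^2 ). In particular, if (2/(2ν−1)) Σ_{i=1}^{ν} j̄_i^2 ∉ { j^2 + jk + k^2 : j, k ∈ ℤ \ S, j ≠ k } where S = {±j̄_1, …, ±j̄_ν}, then this quantity is nonzero for all distinct integers j, k not belonging to S. -/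
/-- Lemma 9.4 (lemma:a jk): with `D = diag(j̄_i)`, `U` the all-ones matrix,
`𝔸 = 3ς D(I-2U)` and `ω̄ = (j̄_i³)`, the sum of the components of `𝔸⁻¹ ω̄`
equals `-(1/(3ς(2ν-1))) Σ j̄_i²`; consequently
`j³ - k³ + 6ς(j-k)(1⃗·𝔸⁻¹ω̄) = (j-k)(j² + jk + k² - (2/(2ν-1)) Σ j̄_i²)`,
which is nonzero for distinct `j, k ∉ S` under the non-degeneracy condition. -/
theorem twist_frequency_combination (ν : ℕ) (hν : 1 ≤ ν)
    (ς : ℝ) (hς : ς = 1 ∨ ς = -1)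
    (jb : Fin ν → ℤ) (hinj : Function.Injective jb) (hpos : ∀ i, 0 < jb i)
    (D U A : Matrix (Fin ν) (Fin ν) ℝ) (ωb : Fin ν → ℝ) (S : Set ℤ)
    (hD : D = Matrix.diagonal fun i => ((jb i : ℝ)))
    (hUdef : U = Matrix.of fun _ _ => (1 : ℝ))
    (hA : A = (3 * ς) • (D * (1 - (2 : ℝ) • U)))
    (hωb : ωb = fun i => ((jb i : ℝ)) ^ 3)
    (hS : S = {x : ℤ | ∃ i, x = jb i ∨ x = -(jb i)}) :
    (∑ i, (A⁻¹.mulVec ωb) i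
        = -(1 / (3 * ς * (2 * (ν : ℝ) - 1))) * ∑ i, ((jb i : ℝ)) ^ 2) ∧
    (∀ j k : ℤ,
      (j : ℝ) ^ 3 - (k : ℝ) ^ 3
          + 6 * ς * ((j : ℝ) - (k : ℝ)) * (∑ i, (A⁻¹.mulVec ωb) i)
        = ((j : ℝ) - (k : ℝ)) *
            ((j : ℝ) ^ 2 + (j : ℝ) * (k : ℝ) + (k : ℝ) ^ 2
              - (2 / (2 * (ν : ℝ) - 1)) * ∑ i, ((jb i : ℝ)) ^ 2)) ∧
    ((¬ ∃ j k : ℤ, j ∉ S ∧ k ∉ S ∧ j ≠ k ∧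
        (2 / (2 * (ν : ℝ) - 1)) * ∑ i, ((jb i : ℝ)) ^ 2
          = (j : ℝ) ^ 2 + (j : ℝ) * (k : ℝ) + (k : ℝ) ^ 2) →
      ∀ j k : ℤ, j ∉ S → k ∉ S → j ≠ k →
        (j : ℝ) ^ 3 - (k : ℝ) ^ 3
            + 6 * ς * ((j : ℝ) - (k : ℝ)) * (∑ i, (A⁻¹.mulVec ωb) i) ≠ 0) := by
  have hς0 : ς ≠ 0 := by rcases hς with h | h <;> rw [h] <;> norm_num
  have hν1 : (1:ℝ) ≤ (ν:ℝ) := by exact_mod_cast hν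
  have hν0 : (2 * (ν:ℝ) - 1) ≠ 0 := by nlinarith
  have hj0 : ∀ i, ((jb i : ℝ)) ≠ 0 := fun i => by
    have := hpos i; exact_mod_cast (hpos i).ne'
  set c : ℝ := 2 / (2 * (ν:ℝ) - 1) with hc
  have hceq : c * (2 * (ν:ℝ) - 1) = 2 := by rw [hc]; field_simp
  set T : ℝ := ∑ i, ((jb i : ℝ)) ^ 2 with hT
  set B : Matrix (Fin ν) (Fin ν) ℝ :=
    Matrix.of fun i j => (1 / (3 * ς)) * ((if i = j then (1:ℝ) else 0) - c) * ((jb j : ℝ))⁻¹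
    with hB
  have hAe : ∀ i j, A i j = 3 * ς * ((jb i : ℝ)) * ((if i = j then (1:ℝ) else 0) - 2) := by
    intro i j
    simp only [hA, hD, hUdef, Matrix.smul_apply, Matrix.diagonal_mul, Matrix.sub_apply,
      Matrix.smul_apply, Matrix.of_apply, Matrix.one_apply, smul_eq_mul]
    ring
  have key : ∀ i k : Fin ν,
      ∑ j, ((if i = j then (1:ℝ) else 0) - 2) * ((if j = k then (1:ℝ) else 0) - c)
        = (if i = k then (1:ℝ) else 0) - c - 2 + 2 * (ν:ℝ) * c := by
    intro i k
    have h1 : ∀ j, ((if i = j then (1:ℝ) else 0) - 2) * ((if j = k then (1:ℝ) else 0) - c)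
        = ((if i = j then (1:ℝ) else 0) * (if j = k then (1:ℝ) else 0)
            - c * (if i = j then (1:ℝ) else 0)) - (2 * (if j = k then (1:ℝ) else 0) - 2 * c) := by
      intro j; ring
    rw [Finset.sum_congr rfl fun j _ => h1 j, Finset.sum_sub_distrib, Finset.sum_sub_distrib,
      Finset.sum_sub_distrib]
    simp [← Finset.mul_sum, Finset.sum_ite_eq, Finset.sum_ite_eq',
      ite_mul, mul_ite, Finset.card_univ]
    ring
  have hAB : A * B = 1 := by
    ext i k
    rw [Matrix.mul_apply]
    have : ∀ j, A i j * B j k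
        = (3 * ς * ((jb i : ℝ)) * (1 / (3 * ς)) * ((jb k : ℝ))⁻¹) *
          (((if i = j then (1:ℝ) else 0) - 2) * ((if j = k then (1:ℝ) else 0) - c)) := by
      intro j; rw [hAe]; simp [hB]; ring
    rw [Finset.sum_congr rfl fun j _ => this j, ← Finset.mul_sum, key]
    have hz : -c - 2 + 2 * (ν:ℝ) * c = 0 := by linear_combination hceq
    by_cases h : i = k
    · subst h
      rw [if_pos rfl, Matrix.one_apply_eq]
      have h1 : (1:ℝ) - c - 2 + 2 * (ν:ℝ) * c = 1 := by linarith
      rw [h1, mul_one]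
      field_simp
      exact div_self (hj0 i)
    · rw [if_neg h, Matrix.one_apply_ne h]
      have h1 : (0:ℝ) - c - 2 + 2 * (ν:ℝ) * c = 0 := by linarith
      rw [h1, mul_zero]
  have hInv : A⁻¹ = B := Matrix.inv_eq_right_inv hAB
  have hmv : ∀ i, (A⁻¹.mulVec ωb) i = (1 / (3 * ς)) * (((jb i : ℝ))^2 - c * T) := by
    intro i
    rw [hInv, Matrix.mulVec, hωb]
    have : ∀ j, B i j * ((jb j : ℝ))^3
        = (1 / (3 * ς)) * ((if i = j then (1:ℝ) else 0) * ((jb j : ℝ))^2 - c * ((jb j : ℝ))^2) := by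
      intro j
      simp only [hB, Matrix.of_apply]
      have hjj : ((jb j : ℝ))⁻¹ * ((jb j : ℝ))^3 = ((jb j : ℝ))^2 := by
        rw [inv_mul_eq_div, div_eq_iff (hj0 j)]
        ring
      rw [show (1/(3*ς)) * ((if i = j then (1:ℝ) else 0) - c) * ((jb j : ℝ))⁻¹ * ((jb j : ℝ))^3
        = (1/(3*ς)) * ((if i = j then (1:ℝ) else 0) - c) * (((jb j : ℝ))⁻¹ * ((jb j : ℝ))^3)
        from by ring, hjj]
      ring
    simp only [dotProduct]
    rw [Finset.sum_congr rfl fun j _ => this j, ← Finset.mul_sum, Finset.sum_sub_distrib,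
      ← Finset.mul_sum]
    simp [ite_mul, Finset.sum_ite_eq, hT]
  have hsum : ∑ i, (A⁻¹.mulVec ωb) i
      = -(1 / (3 * ς * (2 * (ν : ℝ) - 1))) * T := by
    rw [Finset.sum_congr rfl fun i _ => hmv i, ← Finset.mul_sum, Finset.sum_sub_distrib,
      Finset.sum_const, Finset.card_univ]
    simp only [← hT, Fintype.card_fin, nsmul_eq_mul, hc]
    field_simp
    have hx : (-1 + (ν:ℝ) * 2) ≠ 0 := by contrapose! hν0; linarith
    have hxi : (-1 + (ν:ℝ) * 2) * (-1 + (ν:ℝ) * 2)⁻¹ = 1 := mul_inv_cancel₀ hx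
    linear_combination (-T) * hxi
  have part2 : ∀ j k : ℤ,
      (j : ℝ) ^ 3 - (k : ℝ) ^ 3
          + 6 * ς * ((j : ℝ) - (k : ℝ)) * (∑ i, (A⁻¹.mulVec ωb) i)
        = ((j : ℝ) - (k : ℝ)) *
            ((j : ℝ) ^ 2 + (j : ℝ) * (k : ℝ) + (k : ℝ) ^ 2 - c * T) := by
    intro j k
    rw [hsum, hc]
    field_simp
    ring
  refine ⟨hsum, part2, ?_⟩
  intro hnd j k hj hk hjk
  rw [part2 j k]
  apply mul_ne_zero
  · rw [sub_ne_zero]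
    exact_mod_cast fun h => hjk (by exact_mod_cast h)
  · rw [sub_ne_zero]
    intro h
    exact hnd ⟨j, k, hj, hk, hjk, h.symm⟩
end

section
/- Let b ≥ 1 be an integer, s_0 > b/2, and s ≥ s_0. For a matrix A : ℤ^b × ℤ^b → ℂ define its s-decay norm by |A|_s^2 := Σ_{i ∈ ℤ^b} ⟨i⟩^{2s} ( sup_{i_1 − i_2 = i} |A_{i_1}^{i_2}| )^2, where ⟨i⟩ := max(1, |i|). Then there exist constants C(s) ≥ C(s_0) ≥ 1 such that for all matrices A, B with |A|_s, |B|_s < ∞, the product matrix (AB)_{i_1}^{i_2} := Σ_{k ∈ ℤ^b} A_{i_1}^{k} B_{k}^{i_2} is well defined (the series converges absolutely) and satisfies both |AB|_s ≤ C(s) |A|_s |B|_s and the interpolation estimate |AB|_s ≤ C(s) |A|_s |B|_{s_0} + C(s_0) |A|_{s_0} |B|_s. -/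
open scoped ENNReal

/-- The weight `⟨i⟩ := max(1, |i|)` on `ℤ^b`, as an extended nonnegative real. -/
noncomputable def weightE {b : ℕ} (i : Fin b → ℤ) : ℝ≥0∞ :=
  ENNReal.ofReal (max 1 (Real.sqrt (∑ j, ((i j : ℝ)) ^ 2)))

/-- The `s`-decay norm of an infinite dimensional matrix:
`|A|_s² := Σ_{i ∈ ℤ^b} ⟨i⟩^{2s} (sup_{i₁ - i₂ = i} |A_{i₁}^{i₂}|)²`. -/
noncomputable def decayNorm {b : ℕ} (s : ℝ)
    (A : (Fin b → ℤ) → (Fin b → ℤ) → ℂ) : ℝ≥0∞ :=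
  (∑' i : Fin b → ℤ, weightE i ^ (2 * s) *
      (⨆ p : {q : (Fin b → ℤ) × (Fin b → ℤ) // q.1 - q.2 = i},
        (‖A p.val.1 p.val.2‖₊ : ℝ≥0∞)) ^ (2 : ℝ)) ^ ((1 : ℝ) / 2)

namespace DecayAux

variable {b : ℕ}

/-- Auxiliary: the sup over diagonals. -/
noncomputable def supD (A : (Fin b → ℤ) → (Fin b → ℤ) → ℂ) (i : Fin b → ℤ) : ℝ≥0∞ :=
  ⨆ p : {q : (Fin b → ℤ) × (Fin b → ℤ) // q.1 - q.2 = i}, (‖A p.val.1 p.val.2‖₊ : ℝ≥0∞)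

lemma nnnorm_le_supD (A : (Fin b → ℤ) → (Fin b → ℤ) → ℂ) (i₁ i₂ : Fin b → ℤ) :
    (‖A i₁ i₂‖₊ : ℝ≥0∞) ≤ supD A (i₁ - i₂) :=
  le_iSup (fun p : {q : (Fin b → ℤ) × (Fin b → ℤ) // q.1 - q.2 = i₁ - i₂} =>
    (‖A p.val.1 p.val.2‖₊ : ℝ≥0∞)) ⟨(i₁, i₂), rfl⟩

lemma weightE_one_le (i : Fin b → ℤ) : 1 ≤ weightE i :=
  ENNReal.one_le_ofReal.mpr (le_max_left _ _)

lemma weightE_ne_zero (i : Fin b → ℤ) : weightE i ≠ 0 :=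
  fun h => by simpa [h] using weightE_one_le i

lemma weightE_ne_top (i : Fin b → ℤ) : weightE i ≠ ⊤ := ENNReal.ofReal_ne_top

lemma weightE_rpow_ne_zero (i : Fin b → ℤ) (t : ℝ) : weightE i ^ t ≠ 0 := by
  simp [ENNReal.rpow_eq_zero_iff, weightE_ne_zero i, weightE_ne_top i]

lemma weightE_rpow_ne_top (i : Fin b → ℤ) (t : ℝ) : weightE i ^ t ≠ ⊤ := by
  simp [ENNReal.rpow_eq_top_iff, weightE_ne_zero i, weightE_ne_top i]

lemma one_le_weightE_rpow (i : Fin b → ℤ) {t : ℝ} (ht : 0 ≤ t) : 1 ≤ weightE i ^ t := by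
  have h := ENNReal.rpow_le_rpow_of_exponent_le (weightE_one_le i) ht
  rwa [ENNReal.rpow_zero] at h

lemma weightE_rpow_cancel (i : Fin b → ℤ) (t : ℝ) (x : ℝ≥0∞) :
    weightE i ^ (-t) * (weightE i ^ t * x) = x := by
  rw [← mul_assoc, ← ENNReal.rpow_add _ _ (weightE_ne_zero i) (weightE_ne_top i)]
  simp

lemma weightE_triangle (i m : Fin b → ℤ) :
    weightE i ≤ weightE (i - m) + weightE m := by
  rw [weightE, weightE, weightE, ← ENNReal.ofReal_add (le_trans zero_le_one (le_max_left _ _))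
    (le_trans zero_le_one (le_max_left _ _))]
  apply ENNReal.ofReal_le_ofReal
  have key : Real.sqrt (∑ j, ((i j : ℝ)) ^ 2) ≤
      Real.sqrt (∑ j, (((i - m) j : ℝ)) ^ 2) + Real.sqrt (∑ j, ((m j : ℝ)) ^ 2) := by
    have h1 : ∀ (v : Fin b → ℤ), Real.sqrt (∑ j, ((v j : ℝ)) ^ 2)
        = ‖(EuclideanSpace.equiv (Fin b) ℝ).symm (fun j => (v j : ℝ))‖ := by
      intro v
      rw [EuclideanSpace.norm_eq]
      congr 1
      apply Finset.sum_congr rfl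
      intro j _
      simp [sq_abs]
    rw [h1 i, h1 (i - m), h1 m]
    have : (EuclideanSpace.equiv (Fin b) ℝ).symm (fun j => ((i j : ℝ)))
        = (EuclideanSpace.equiv (Fin b) ℝ).symm (fun j => (((i - m) j : ℝ)))
          + (EuclideanSpace.equiv (Fin b) ℝ).symm (fun j => ((m j : ℝ))) := by
      ext j
      simp [EuclideanSpace.equiv, Pi.sub_apply]
    rw [this]
    exact norm_add_le _ _
  apply max_le
  · have := le_max_left (1:ℝ) (Real.sqrt (∑ j, (((i-m) j : ℝ))^2))
    have h2 := le_max_left (1:ℝ) (Real.sqrt (∑ j, ((m j : ℝ))^2))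
    linarith
  · exact key.trans (add_le_add (le_max_right _ _) (le_max_right _ _))

lemma weightE_rpow_split {s : ℝ} (hs : 0 ≤ s) (i m : Fin b → ℤ) :
    weightE i ^ s ≤ 2 ^ s * (weightE (i - m) ^ s + weightE m ^ s) := by
  have h1 : weightE i ≤ 2 * max (weightE (i-m)) (weightE m) := by
    refine (weightE_triangle i m).trans ?_
    rw [two_mul]
    exact add_le_add (le_max_left _ _) (le_max_right _ _)
  calc weightE i ^ s ≤ (2 * max (weightE (i-m)) (weightE m)) ^ s :=
        ENNReal.rpow_le_rpow h1 hs
    _ = 2 ^ s * (max (weightE (i-m)) (weightE m)) ^ s := ENNReal.mul_rpow_of_nonneg _ _ hs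
    _ ≤ 2 ^ s * (weightE (i - m) ^ s + weightE m ^ s) := by
        gcongr
        rcases max_cases (weightE (i-m)) (weightE m) with ⟨h, _⟩ | ⟨h, _⟩ <;> rw [h]
        · exact le_self_add
        · exact le_add_self

lemma tsum_cs {ι : Type*} (u v : ι → ℝ≥0∞) :
    ∑' i, u i * v i ≤ (∑' i, u i ^ (2:ℝ)) ^ ((1:ℝ)/2) * (∑' i, v i ^ (2:ℝ)) ^ ((1:ℝ)/2) := by
  rw [ENNReal.tsum_eq_iSup_sum]
  refine iSup_le fun t => ?_
  have hconj : Real.HolderConjugate 2 2 :=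
    (Real.holderConjugate_iff_eq_conjExponent one_lt_two).mpr (by norm_num)
  refine (ENNReal.inner_le_Lp_mul_Lq t u v hconj).trans ?_
  exact mul_le_mul' (ENNReal.rpow_le_rpow (ENNReal.sum_le_tsum t) (by norm_num))
    (ENNReal.rpow_le_rpow (ENNReal.sum_le_tsum t) (by norm_num))

lemma tsum_cs_sq {ι : Type*} (u v : ι → ℝ≥0∞) :
    (∑' i, u i * v i) ^ (2:ℝ) ≤ (∑' i, u i ^ (2:ℝ)) * (∑' i, v i ^ (2:ℝ)) := by
  calc (∑' i, u i * v i) ^ (2:ℝ)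
      ≤ ((∑' i, u i ^ (2:ℝ)) ^ ((1:ℝ)/2) * (∑' i, v i ^ (2:ℝ)) ^ ((1:ℝ)/2)) ^ (2:ℝ) :=
        ENNReal.rpow_le_rpow (tsum_cs u v) (by norm_num)
    _ = (∑' i, u i ^ (2:ℝ)) * (∑' i, v i ^ (2:ℝ)) := by
        rw [ENNReal.mul_rpow_of_nonneg _ _ (by norm_num : (0:ℝ) ≤ 2),
          ← ENNReal.rpow_mul, ← ENNReal.rpow_mul]
        norm_num

lemma add_sq_le (x y : ℝ≥0∞) : (x + y) ^ (2:ℝ) ≤ 2 ^ (2:ℝ) * (x ^ (2:ℝ) + y ^ (2:ℝ)) := by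
  have h1 : x + y ≤ 2 * max x y := by
    rw [two_mul]; exact add_le_add (le_max_left _ _) (le_max_right _ _)
  calc (x + y) ^ (2:ℝ) ≤ (2 * max x y) ^ (2:ℝ) := ENNReal.rpow_le_rpow h1 (by norm_num)
    _ = 2 ^ (2:ℝ) * (max x y) ^ (2:ℝ) := ENNReal.mul_rpow_of_nonneg _ _ (by norm_num)
    _ ≤ 2 ^ (2:ℝ) * (x ^ (2:ℝ) + y ^ (2:ℝ)) := by
        gcongr
        rcases max_cases x y with ⟨h, _⟩ | ⟨h, _⟩ <;> rw [h]
        · exact le_self_add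
        · exact le_add_self

noncomputable def gE (q : ℝ) (n : ℤ) : ℝ≥0∞ := ENNReal.ofReal (max 1 |(n : ℝ)|) ^ (-q)

lemma summable_gE {q : ℝ} (hq : 1 < q) : ∑' n : ℤ, gE q n ≠ ⊤ := by
  have heq : ∀ n : ℤ, gE q n = ENNReal.ofReal ((max 1 |(n:ℝ)|) ^ (-q)) := by
    intro n
    rw [gE, ENNReal.ofReal_rpow_of_pos (lt_of_lt_of_le zero_lt_one (le_max_left _ _))]
  have hsum : Summable (fun n : ℤ => (max 1 |(n:ℝ)|) ^ (-q)) := by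
    have h1 := Real.summable_abs_int_rpow hq
    have h2 : Summable (Function.update (fun n : ℤ => |(n:ℝ)| ^ (-q)) 0 1) :=
      ((h1.hasSum.update 0 1).summable)
    refine h2.congr fun n => ?_
    rcases eq_or_ne n 0 with rfl | hn
    · simp [Function.update]
    · rw [Function.update_of_ne hn]
      congr 1
      rw [max_eq_right]
      have : (1:ℤ) ≤ |n| := Int.one_le_abs (by simpa using hn)
      calc (1:ℝ) ≤ (|n| : ℤ) := by exact_mod_cast this
        _ = |(n:ℝ)| := by push_cast; ring
  simp_rw [heq]
  rw [← ENNReal.ofReal_tsum_of_nonneg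
    (fun n => Real.rpow_nonneg (le_trans zero_le_one (le_max_left _ _)) _) hsum]
  exact ENNReal.ofReal_ne_top

lemma tsum_pi_prod (g : ℤ → ℝ≥0∞) : ∀ n : ℕ,
    ∑' m : Fin n → ℤ, ∏ j, g (m j) = (∑' k : ℤ, g k) ^ n := by
  intro n
  induction n with
  | zero =>
    rw [tsum_eq_single (fun j => (0:ℤ)) (fun b' hb' => absurd (Subsingleton.elim b' _) hb')]
    simp
  | succ n ih =>
    rw [← (Fin.consEquiv (fun _ : Fin (n+1) => ℤ)).tsum_eq]
    rw [ENNReal.tsum_prod']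
    have : ∀ (x : ℤ) (m : Fin n → ℤ),
        ∏ j, g ((Fin.consEquiv (fun _ : Fin (n+1) => ℤ)) (x, m) j) = g x * ∏ j, g (m j) := by
      intro x m
      rw [Fin.prod_univ_succ]
      simp [Fin.consEquiv]
    simp_rw [this]
    simp_rw [ENNReal.tsum_mul_left]
    rw [ENNReal.tsum_mul_right, ih, pow_succ, mul_comm]

lemma coord_le_weightE (m : Fin b → ℤ) (j : Fin b) :
    ENNReal.ofReal (max 1 |(m j : ℝ)|) ≤ weightE m := by
  apply ENNReal.ofReal_le_ofReal
  apply max_le_max le_rfl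
  rw [← Real.sqrt_sq_eq_abs]
  exact Real.sqrt_le_sqrt
    (Finset.single_le_sum (fun k _ => sq_nonneg ((m k : ℝ))) (Finset.mem_univ j))

lemma weightE_neg_rpow_le (hb : 1 ≤ b) {s₀ : ℝ} (hs₀ : 0 < s₀) (m : Fin b → ℤ) :
    weightE m ^ (-(2*s₀)) ≤ ∏ j, gE (2*s₀/b) (m j) := by
  set q : ℝ := 2*s₀/b with hq
  have hb0 : (0:ℝ) < b := by exact_mod_cast hb
  have hq0 : 0 < q := by positivity
  have h1 : ∀ j, (ENNReal.ofReal (max 1 |(m j : ℝ)|)) ^ q ≤ weightE m ^ q :=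
    fun j => ENNReal.rpow_le_rpow (coord_le_weightE m j) hq0.le
  have h2 : ∏ j, (ENNReal.ofReal (max 1 |(m j : ℝ)|)) ^ q ≤ weightE m ^ (2*s₀) := by
    calc ∏ j, (ENNReal.ofReal (max 1 |(m j : ℝ)|)) ^ q ≤ ∏ _j : Fin b, weightE m ^ q :=
          Finset.prod_le_prod' (fun j _ => h1 j)
      _ = (weightE m ^ q) ^ (b : ℕ) := by
          rw [Finset.prod_const, Finset.card_univ, Fintype.card_fin]
      _ = weightE m ^ (q * b) := by rw [← ENNReal.rpow_natCast (weightE m ^ q), ← ENNReal.rpow_mul]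
      _ = weightE m ^ (2*s₀) := by
          congr 1
          rw [hq]; field_simp
  have h3 : ∏ j, gE q (m j) = (∏ j, (ENNReal.ofReal (max 1 |(m j : ℝ)|)) ^ q)⁻¹ := by
    rw [ENNReal.prod_inv_distrib]
    · simp_rw [gE, ENNReal.rpow_neg]
    · intro i _ j _ _
      left
      simp only [ne_eq, ENNReal.rpow_eq_zero_iff, not_or]
      constructor
      · rintro ⟨h, -⟩
        exact absurd h
          (ne_of_gt (lt_of_lt_of_le zero_lt_one (ENNReal.one_le_ofReal.mpr (le_max_left _ _))))
      · rintro ⟨h, -⟩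
        exact ENNReal.ofReal_ne_top h
  rw [h3, ENNReal.rpow_neg]
  exact ENNReal.inv_le_inv.mpr h2

lemma K_ne_top (hb : 1 ≤ b) {s₀ : ℝ} (hs₀ : (b:ℝ)/2 < s₀) :
    ∑' m : Fin b → ℤ, weightE m ^ (-(2*s₀)) ≠ ⊤ := by
  have hb0 : (0:ℝ) < b := by exact_mod_cast hb
  have hs₀' : 0 < s₀ := lt_of_le_of_lt (by positivity) hs₀
  have hq : 1 < 2*s₀/b := by
    rw [lt_div_iff₀ hb0]
    linarith
  refine ne_top_of_le_ne_top ?_ (ENNReal.tsum_le_tsum (weightE_neg_rpow_le hb hs₀'))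
  rw [tsum_pi_prod]
  exact ENNReal.pow_ne_top (summable_gE hq)

lemma decayNorm_eq (s : ℝ) (A : (Fin b → ℤ) → (Fin b → ℤ) → ℂ) :
    decayNorm s A = (∑' i, (weightE i ^ s * supD A i) ^ (2:ℝ)) ^ ((1:ℝ)/2) := by
  rw [decayNorm]
  congr 1
  apply tsum_congr
  intro i
  rw [ENNReal.mul_rpow_of_nonneg _ _ (by norm_num : (0:ℝ) ≤ 2), ← ENNReal.rpow_mul]
  congr 2
  ring

lemma tsum_shift {ι : Type*} [AddCommGroup ι] (f : ι → ℝ≥0∞) (m : ι) :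
    ∑' i, f (i - m) = ∑' i, f i :=
  (Equiv.subRight m).tsum_eq f

lemma tsum_shift' {ι : Type*} [AddCommGroup ι] (f : ι → ℝ≥0∞) (j : ι) :
    ∑' i, f (j - i) = ∑' i, f i :=
  (Equiv.subLeft j).tsum_eq f

lemma tsum_tsum_shift {ι : Type*} [AddCommGroup ι] (f g : ι → ℝ≥0∞) :
    ∑' (i : ι), ∑' (m : ι), f (i - m) * g m = (∑' i, f i) * (∑' m, g m) := by
  rw [ENNReal.tsum_comm]
  calc ∑' (m : ι), ∑' (i : ι), f (i - m) * g m
      = ∑' (m : ι), (∑' (i : ι), f (i - m)) * g m := by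
        simp_rw [ENNReal.tsum_mul_right]
    _ = ∑' (m : ι), (∑' i, f i) * g m := by
        simp_rw [tsum_shift]
    _ = (∑' i, f i) * (∑' m, g m) := ENNReal.tsum_mul_left

/-- decayNorm is monotone in `s`. -/
lemma decayNorm_mono {s₀ s : ℝ} (hs₀ : 0 ≤ s₀) (hs : s₀ ≤ s)
    (A : (Fin b → ℤ) → (Fin b → ℤ) → ℂ) : decayNorm s₀ A ≤ decayNorm s A := by
  rw [decayNorm_eq, decayNorm_eq]
  apply ENNReal.rpow_le_rpow _ (by norm_num)
  apply ENNReal.tsum_le_tsum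
  intro i
  apply ENNReal.rpow_le_rpow _ (by norm_num)
  exact mul_le_mul_left
    (ENNReal.rpow_le_rpow_of_exponent_le (weightE_one_le i) hs) _

end DecayAux

namespace DecayAux

/-- Weighted diagonal-decay coefficients. -/
noncomputable def wS (s : ℝ) (A : (Fin b → ℤ) → (Fin b → ℤ) → ℂ) (i : Fin b → ℤ) : ℝ≥0∞ :=
  weightE i ^ s * supD A i

lemma decayNorm_eq' (s : ℝ) (A : (Fin b → ℤ) → (Fin b → ℤ) → ℂ) :
    decayNorm s A = (∑' i, wS s A i ^ (2:ℝ)) ^ ((1:ℝ)/2) := decayNorm_eq s A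

lemma step_conv {ι : Type*} [AddCommGroup ι] (u f g : ι → ℝ≥0∞) :
    ∑' (i : ι), (∑' (m : ι), u m * (f (i-m) * g m)) ^ (2:ℝ)
      ≤ (∑' m, u m ^ (2:ℝ)) * ((∑' i, f i ^ (2:ℝ)) * (∑' m, g m ^ (2:ℝ))) := by
  calc ∑' (i : ι), (∑' (m : ι), u m * (f (i-m) * g m)) ^ (2:ℝ)
      ≤ ∑' (i : ι), (∑' m, u m ^ (2:ℝ)) * (∑' m, (f (i-m) * g m) ^ (2:ℝ)) :=
        ENNReal.tsum_le_tsum fun i => tsum_cs_sq u (fun m => f (i-m) * g m)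
    _ = (∑' m, u m ^ (2:ℝ)) * ∑' (i : ι), ∑' (m : ι), (f (i-m) * g m) ^ (2:ℝ) :=
        ENNReal.tsum_mul_left
    _ = (∑' m, u m ^ (2:ℝ)) * ((∑' i, f i ^ (2:ℝ)) * (∑' m, g m ^ (2:ℝ))) := by
        congr 1
        calc ∑' (i : ι), ∑' (m : ι), (f (i-m) * g m) ^ (2:ℝ)
            = ∑' (i : ι), ∑' (m : ι), (fun x => f x ^ (2:ℝ)) (i-m) * g m ^ (2:ℝ) := by
              apply tsum_congr; intro i; apply tsum_congr; intro m
              exact ENNReal.mul_rpow_of_nonneg _ _ (by norm_num)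
          _ = (∑' i, f i ^ (2:ℝ)) * (∑' m, g m ^ (2:ℝ)) :=
              tsum_tsum_shift (fun x => f x ^ (2:ℝ)) (fun m => g m ^ (2:ℝ))

lemma step_conv' {ι : Type*} [AddCommGroup ι] (u f g : ι → ℝ≥0∞) :
    ∑' (i : ι), (∑' (m : ι), u (i-m) * (f (i-m) * g m)) ^ (2:ℝ)
      ≤ (∑' m, u m ^ (2:ℝ)) * ((∑' i, f i ^ (2:ℝ)) * (∑' m, g m ^ (2:ℝ))) := by
  calc ∑' (i : ι), (∑' (m : ι), u (i-m) * (f (i-m) * g m)) ^ (2:ℝ)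
      ≤ ∑' (i : ι), (∑' m, u (i-m) ^ (2:ℝ)) * (∑' m, (f (i-m) * g m) ^ (2:ℝ)) :=
        ENNReal.tsum_le_tsum fun i =>
          tsum_cs_sq (fun m => u (i-m)) (fun m => f (i-m) * g m)
    _ = ∑' (i : ι), (∑' m, u m ^ (2:ℝ)) * (∑' m, (f (i-m) * g m) ^ (2:ℝ)) := by
        apply tsum_congr; intro i
        rw [tsum_shift' (fun x => u x ^ (2:ℝ)) i]
    _ = (∑' m, u m ^ (2:ℝ)) * ∑' (i : ι), ∑' (m : ι), (f (i-m) * g m) ^ (2:ℝ) :=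
        ENNReal.tsum_mul_left
    _ = (∑' m, u m ^ (2:ℝ)) * ((∑' i, f i ^ (2:ℝ)) * (∑' m, g m ^ (2:ℝ))) := by
        congr 1
        calc ∑' (i : ι), ∑' (m : ι), (f (i-m) * g m) ^ (2:ℝ)
            = ∑' (i : ι), ∑' (m : ι), (fun x => f x ^ (2:ℝ)) (i-m) * g m ^ (2:ℝ) := by
              apply tsum_congr; intro i; apply tsum_congr; intro m
              exact ENNReal.mul_rpow_of_nonneg _ _ (by norm_num)
          _ = (∑' i, f i ^ (2:ℝ)) * (∑' m, g m ^ (2:ℝ)) :=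
              tsum_tsum_shift (fun x => f x ^ (2:ℝ)) (fun m => g m ^ (2:ℝ))

end DecayAux

open DecayAux in
/-- Lemma 2.5 (prodest): algebra and interpolation inequalities for the
`s`-decay norm with respect to matrix multiplication. -/
theorem decayNorm_mul (b : ℕ) (hb : 1 ≤ b) (s₀ s : ℝ)
    (hs₀ : (b : ℝ) / 2 < s₀) (hs : s₀ ≤ s) :
    ∃ Cs Cs₀ : ℝ≥0∞, 1 ≤ Cs₀ ∧ Cs₀ ≤ Cs ∧ Cs ≠ ⊤ ∧
      ∀ A B : (Fin b → ℤ) → (Fin b → ℤ) → ℂ,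
        decayNorm s A ≠ ⊤ → decayNorm s B ≠ ⊤ →
        (∀ i₁ i₂ : Fin b → ℤ, Summable fun k => ‖A i₁ k‖ * ‖B k i₂‖) ∧
        decayNorm s (fun i₁ i₂ => ∑' k, A i₁ k * B k i₂)
          ≤ Cs * decayNorm s A * decayNorm s B ∧
        decayNorm s (fun i₁ i₂ => ∑' k, A i₁ k * B k i₂)
          ≤ Cs * decayNorm s A * decayNorm s₀ B
            + Cs₀ * decayNorm s₀ A * decayNorm s B := by
  have hb0 : (0:ℝ) < b := by exact_mod_cast hb
  have hs₀pos : 0 < s₀ := lt_of_le_of_lt (by positivity) hs₀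
  have hspos : 0 < s := lt_of_lt_of_le hs₀pos hs
  set K : ℝ≥0∞ := ∑' m : Fin b → ℤ, weightE m ^ (-(2*s₀)) with hKdef
  have hK : K ≠ ⊤ := K_ne_top hb hs₀
  set D : ℝ≥0∞ := 2 ^ (2:ℝ) * ((2:ℝ≥0∞) ^ s) ^ (2:ℝ) * K with hDdef
  have h2s_ne_top : ((2:ℝ≥0∞) ^ s) ≠ ⊤ :=
    ENNReal.rpow_ne_top_of_nonneg hspos.le ENNReal.ofNat_ne_top
  have hD : D ≠ ⊤ := by
    apply ENNReal.mul_ne_top (ENNReal.mul_ne_top ?_ ?_) hK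
    · exact ENNReal.rpow_ne_top_of_nonneg (by norm_num) ENNReal.ofNat_ne_top
    · exact ENNReal.rpow_ne_top_of_nonneg (by norm_num) h2s_ne_top
  set C' : ℝ≥0∞ := D ^ ((1:ℝ)/2) with hC'def
  have hC' : C' ≠ ⊤ := by
    rw [hC'def]
    exact ENNReal.rpow_ne_top_of_nonneg (by norm_num) hD
  refine ⟨2 * max 1 C', 2 * max 1 C', ?_, le_rfl, ?_, ?_⟩
  · calc (1:ℝ≥0∞) ≤ 2 * 1 := by norm_num
      _ ≤ 2 * max 1 C' := mul_le_mul_right (le_max_left _ _) _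
  · refine ENNReal.mul_ne_top ENNReal.ofNat_ne_top ?_
    refine ne_top_of_le_ne_top (ENNReal.add_ne_top.mpr ⟨ENNReal.one_ne_top, hC'⟩) ?_
    exact max_le le_self_add le_add_self
  intro A B hA hB
  -- notation
  set AB : (Fin b → ℤ) → (Fin b → ℤ) → ℂ := fun i₁ i₂ => ∑' k, A i₁ k * B k i₂ with hABdef
  set NA : ℝ≥0∞ := ∑' i, wS s A i ^ (2:ℝ) with hNAdef
  set NA₀ : ℝ≥0∞ := ∑' i, wS s₀ A i ^ (2:ℝ) with hNA₀def
  set NB : ℝ≥0∞ := ∑' i, wS s B i ^ (2:ℝ) with hNBdef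
  set NB₀ : ℝ≥0∞ := ∑' i, wS s₀ B i ^ (2:ℝ) with hNB₀def
  have hdA : decayNorm s A = NA ^ ((1:ℝ)/2) := decayNorm_eq' s A
  have hdA₀ : decayNorm s₀ A = NA₀ ^ ((1:ℝ)/2) := decayNorm_eq' s₀ A
  have hdB : decayNorm s B = NB ^ ((1:ℝ)/2) := decayNorm_eq' s B
  have hdB₀ : decayNorm s₀ B = NB₀ ^ ((1:ℝ)/2) := decayNorm_eq' s₀ B
  -- supD is dominated by the weighted coefficients
  have hsup_le : ∀ (M : (Fin b → ℤ) → (Fin b → ℤ) → ℂ) (i : Fin b → ℤ),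
      supD M i ≤ wS s M i := by
    intro M i
    calc supD M i = 1 * supD M i := (one_mul _).symm
      _ ≤ weightE i ^ s * supD M i := mul_le_mul_left (one_le_weightE_rpow i hspos.le) _
  -- convolution bound for each entry
  have hconv_le : ∀ i₁ i₂ : Fin b → ℤ,
      (∑' k, (‖A i₁ k‖₊ : ℝ≥0∞) * (‖B k i₂‖₊ : ℝ≥0∞)) ≤ decayNorm s A * decayNorm s B := by
    intro i₁ i₂
    have hA2 : ∑' k, supD A k ^ (2:ℝ) ≤ NA :=
      ENNReal.tsum_le_tsum fun k => ENNReal.rpow_le_rpow (hsup_le A k) (by norm_num)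
    have hB2 : ∑' k, supD B k ^ (2:ℝ) ≤ NB :=
      ENNReal.tsum_le_tsum fun k => ENNReal.rpow_le_rpow (hsup_le B k) (by norm_num)
    calc ∑' k, (‖A i₁ k‖₊ : ℝ≥0∞) * (‖B k i₂‖₊ : ℝ≥0∞)
        ≤ ∑' k, supD A (i₁ - k) * supD B (k - i₂) :=
          ENNReal.tsum_le_tsum fun k =>
            mul_le_mul' (nnnorm_le_supD A i₁ k) (nnnorm_le_supD B k i₂)
      _ ≤ (∑' k, supD A (i₁ - k) ^ (2:ℝ)) ^ ((1:ℝ)/2)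
            * (∑' k, supD B (k - i₂) ^ (2:ℝ)) ^ ((1:ℝ)/2) :=
          tsum_cs _ _
      _ = (∑' k, supD A k ^ (2:ℝ)) ^ ((1:ℝ)/2) * (∑' k, supD B k ^ (2:ℝ)) ^ ((1:ℝ)/2) := by
          rw [tsum_shift' (fun k => supD A k ^ (2:ℝ)) i₁,
            tsum_shift (fun k => supD B k ^ (2:ℝ)) i₂]
      _ ≤ NA ^ ((1:ℝ)/2) * NB ^ ((1:ℝ)/2) :=
          mul_le_mul' (ENNReal.rpow_le_rpow hA2 (by norm_num))
            (ENNReal.rpow_le_rpow hB2 (by norm_num))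
      _ = decayNorm s A * decayNorm s B := by rw [hdA, hdB]
  have hfin : ∀ i₁ i₂ : Fin b → ℤ,
      (∑' k, (‖A i₁ k‖₊ : ℝ≥0∞) * (‖B k i₂‖₊ : ℝ≥0∞)) ≠ ⊤ :=
    fun i₁ i₂ => ne_top_of_le_ne_top (ENNReal.mul_ne_top hA hB) (hconv_le i₁ i₂)
  have hsummable₀ : ∀ i₁ i₂ : Fin b → ℤ, Summable fun k => ‖A i₁ k‖₊ * ‖B k i₂‖₊ := by
    intro i₁ i₂
    apply ENNReal.tsum_coe_ne_top_iff_summable.mp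
    simpa [ENNReal.coe_mul] using hfin i₁ i₂
  have hsummable : ∀ i₁ i₂ : Fin b → ℤ, Summable fun k => ‖A i₁ k‖ * ‖B k i₂‖ := by
    intro i₁ i₂
    have := NNReal.summable_coe.mpr (hsummable₀ i₁ i₂)
    simpa [NNReal.coe_mul] using this
  -- pointwise bound on the sup of the product matrix
  have P1 : ∀ i : Fin b → ℤ, supD AB i ≤ ∑' m, supD A (i - m) * supD B m := by
    intro i
    refine iSup_le ?_
    rintro ⟨⟨i₁, i₂⟩, rfl⟩
    have hsum2 : Summable fun k => ‖A i₁ k * B k i₂‖₊ := by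
      refine (hsummable₀ i₁ i₂).congr fun k => ?_
      rw [nnnorm_mul]
    calc (↑‖∑' k, A i₁ k * B k i₂‖₊ : ℝ≥0∞)
        ≤ (↑(∑' k, ‖A i₁ k * B k i₂‖₊) : ℝ≥0∞) := ENNReal.coe_le_coe.mpr (nnnorm_tsum_le hsum2)
      _ = ∑' k, (‖A i₁ k * B k i₂‖₊ : ℝ≥0∞) := ENNReal.coe_tsum hsum2
      _ = ∑' k, (‖A i₁ k‖₊ : ℝ≥0∞) * (‖B k i₂‖₊ : ℝ≥0∞) := by
          apply tsum_congr; intro k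
          rw [nnnorm_mul, ENNReal.coe_mul]
      _ ≤ ∑' k, supD A (i₁ - k) * supD B (k - i₂) :=
          ENNReal.tsum_le_tsum fun k =>
            mul_le_mul' (nnnorm_le_supD A i₁ k) (nnnorm_le_supD B k i₂)
      _ = ∑' m, supD A (i₁ - i₂ - m) * supD B m := by
          rw [← (Equiv.addRight i₂).tsum_eq (fun k => supD A (i₁ - k) * supD B (k - i₂))]
          apply tsum_congr; intro m
          simp only [Equiv.coe_addRight]
          have e1 : i₁ - (m + i₂) = i₁ - i₂ - m := by abel
          have e2 : m + i₂ - i₂ = m := by abel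
          rw [e1, e2]
  -- weighted pointwise bound
  have P2 : ∀ i : Fin b → ℤ, wS s AB i ≤ (2:ℝ≥0∞) ^ s *
      ((∑' m, weightE m ^ (-s₀) * (wS s A (i-m) * wS s₀ B m))
        + (∑' m, weightE (i-m) ^ (-s₀) * (wS s₀ A (i-m) * wS s B m))) := by
    intro i
    have key : ∀ m : Fin b → ℤ, weightE i ^ s * (supD A (i-m) * supD B m) ≤
        (2:ℝ≥0∞) ^ s * (weightE m ^ (-s₀) * (wS s A (i-m) * wS s₀ B m)
          + weightE (i-m) ^ (-s₀) * (wS s₀ A (i-m) * wS s B m)) := by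
      intro m
      have e1 : weightE m ^ (-s₀) * (wS s A (i-m) * wS s₀ B m)
          = weightE (i-m) ^ s * (supD A (i-m) * supD B m) := by
        rw [wS, wS]
        calc weightE m ^ (-s₀) * (weightE (i-m) ^ s * supD A (i-m)
              * (weightE m ^ s₀ * supD B m))
            = (weightE (i-m) ^ s * supD A (i-m))
              * (weightE m ^ (-s₀) * (weightE m ^ s₀ * supD B m)) := by ring
          _ = (weightE (i-m) ^ s * supD A (i-m)) * supD B m := by rw [weightE_rpow_cancel]
          _ = weightE (i-m) ^ s * (supD A (i-m) * supD B m) := by ring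
      have e2 : weightE (i-m) ^ (-s₀) * (wS s₀ A (i-m) * wS s B m)
          = weightE m ^ s * (supD A (i-m) * supD B m) := by
        rw [wS, wS]
        calc weightE (i-m) ^ (-s₀) * (weightE (i-m) ^ s₀ * supD A (i-m)
              * (weightE m ^ s * supD B m))
            = (weightE m ^ s * supD B m)
              * (weightE (i-m) ^ (-s₀) * (weightE (i-m) ^ s₀ * supD A (i-m))) := by ring
          _ = (weightE m ^ s * supD B m) * supD A (i-m) := by rw [weightE_rpow_cancel]
          _ = weightE m ^ s * (supD A (i-m) * supD B m) := by ring
      rw [e1, e2]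
      refine le_trans (mul_le_mul_left (weightE_rpow_split hspos.le i m)
        (supD A (i-m) * supD B m)) (le_of_eq ?_)
      ring
    calc wS s AB i ≤ weightE i ^ s * ∑' m, supD A (i-m) * supD B m :=
          mul_le_mul_right (P1 i) _
      _ = ∑' m, weightE i ^ s * (supD A (i-m) * supD B m) := ENNReal.tsum_mul_left.symm
      _ ≤ ∑' m, (2:ℝ≥0∞) ^ s * (weightE m ^ (-s₀) * (wS s A (i-m) * wS s₀ B m)
            + weightE (i-m) ^ (-s₀) * (wS s₀ A (i-m) * wS s B m)) :=
          ENNReal.tsum_le_tsum key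
      _ = (2:ℝ≥0∞) ^ s *
          ((∑' m, weightE m ^ (-s₀) * (wS s A (i-m) * wS s₀ B m))
            + (∑' m, weightE (i-m) ^ (-s₀) * (wS s₀ A (i-m) * wS s B m))) := by
          rw [ENNReal.tsum_mul_left, ENNReal.tsum_add]
  -- the term-wise weights squared sum to K
  have hKu : ∑' m : Fin b → ℤ, (weightE m ^ (-s₀)) ^ (2:ℝ) = K := by
    rw [hKdef]
    apply tsum_congr; intro m
    rw [← ENNReal.rpow_mul]
    congr 1
    ring
  -- sum the squares
  have P3 : ∑' i, wS s AB i ^ (2:ℝ) ≤ D * (NA * NB₀ + NA₀ * NB) := by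
    have hT1 : ∑' i, (∑' m, weightE m ^ (-s₀) * (wS s A (i-m) * wS s₀ B m)) ^ (2:ℝ)
        ≤ K * (NA * NB₀) := by
      have := step_conv (fun m => weightE m ^ (-s₀)) (wS s A) (wS s₀ B)
      rwa [hKu] at this
    have hT2 : ∑' i, (∑' m, weightE (i-m) ^ (-s₀) * (wS s₀ A (i-m) * wS s B m)) ^ (2:ℝ)
        ≤ K * (NA₀ * NB) := by
      have := step_conv' (fun m => weightE m ^ (-s₀)) (wS s₀ A) (wS s B)
      rwa [hKu] at this
    calc ∑' i, wS s AB i ^ (2:ℝ)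
        ≤ ∑' i, ((2:ℝ≥0∞) ^ s *
            ((∑' m, weightE m ^ (-s₀) * (wS s A (i-m) * wS s₀ B m))
              + (∑' m, weightE (i-m) ^ (-s₀) * (wS s₀ A (i-m) * wS s B m)))) ^ (2:ℝ) :=
          ENNReal.tsum_le_tsum fun i => ENNReal.rpow_le_rpow (P2 i) (by norm_num)
      _ ≤ ∑' i, ((2:ℝ≥0∞) ^ s) ^ (2:ℝ) * (2 ^ (2:ℝ) *
            ((∑' m, weightE m ^ (-s₀) * (wS s A (i-m) * wS s₀ B m)) ^ (2:ℝ)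
              + (∑' m, weightE (i-m) ^ (-s₀) * (wS s₀ A (i-m) * wS s B m)) ^ (2:ℝ))) := by
          apply ENNReal.tsum_le_tsum
          intro i
          rw [ENNReal.mul_rpow_of_nonneg _ _ (by norm_num : (0:ℝ) ≤ 2)]
          exact mul_le_mul_right (add_sq_le _ _) _
      _ = ((2:ℝ≥0∞) ^ s) ^ (2:ℝ) * (2 ^ (2:ℝ) *
            ((∑' i, (∑' m, weightE m ^ (-s₀) * (wS s A (i-m) * wS s₀ B m)) ^ (2:ℝ))
              + ∑' i, (∑' m, weightE (i-m) ^ (-s₀) * (wS s₀ A (i-m) * wS s B m)) ^ (2:ℝ))) := by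
          rw [ENNReal.tsum_mul_left]
          congr 1
          rw [ENNReal.tsum_mul_left]
          congr 1
          rw [ENNReal.tsum_add]
      _ ≤ ((2:ℝ≥0∞) ^ s) ^ (2:ℝ) * (2 ^ (2:ℝ) * (K * (NA * NB₀) + K * (NA₀ * NB))) := by
          gcongr
      _ = D * (NA * NB₀ + NA₀ * NB) := by
          rw [hDdef]
          ring
  -- interpolation-type bound with constant C'
  have P4 : decayNorm s AB ≤ C' * (decayNorm s A * decayNorm s₀ B
      + decayNorm s₀ A * decayNorm s B) := by
    calc decayNorm s AB = (∑' i, wS s AB i ^ (2:ℝ)) ^ ((1:ℝ)/2) := decayNorm_eq' s AB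
      _ ≤ (D * (NA * NB₀ + NA₀ * NB)) ^ ((1:ℝ)/2) :=
          ENNReal.rpow_le_rpow P3 (by norm_num)
      _ = C' * ((NA * NB₀ + NA₀ * NB)) ^ ((1:ℝ)/2) := by
          rw [hC'def, ENNReal.mul_rpow_of_nonneg _ _ (by norm_num : (0:ℝ) ≤ 1/2)]
      _ ≤ C' * ((NA * NB₀) ^ ((1:ℝ)/2) + (NA₀ * NB) ^ ((1:ℝ)/2)) :=
          mul_le_mul_right (ENNReal.rpow_add_le_add_rpow _ _ (by norm_num) (by norm_num)) _
      _ = C' * (decayNorm s A * decayNorm s₀ B + decayNorm s₀ A * decayNorm s B) := by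
          rw [ENNReal.mul_rpow_of_nonneg _ _ (by norm_num : (0:ℝ) ≤ 1/2),
            ENNReal.mul_rpow_of_nonneg _ _ (by norm_num : (0:ℝ) ≤ 1/2),
            hdA, hdA₀, hdB, hdB₀]
  have hC'le : C' ≤ 2 * max 1 C' :=
    le_trans (le_max_right 1 C') (le_mul_of_one_le_left' one_le_two)
  refine ⟨hsummable, ?_, ?_⟩
  · -- algebra bound
    have hmB : decayNorm s₀ B ≤ decayNorm s B := decayNorm_mono hs₀pos.le hs B
    have hmA : decayNorm s₀ A ≤ decayNorm s A := decayNorm_mono hs₀pos.le hs A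
    calc decayNorm s AB
        ≤ C' * (decayNorm s A * decayNorm s₀ B + decayNorm s₀ A * decayNorm s B) := P4
      _ ≤ C' * (decayNorm s A * decayNorm s B + decayNorm s A * decayNorm s B) := by
          gcongr
      _ = 2 * C' * (decayNorm s A * decayNorm s B) := by ring
      _ ≤ 2 * max 1 C' * (decayNorm s A * decayNorm s B) := by
          gcongr
          exact le_max_right 1 C'
      _ = 2 * max 1 C' * decayNorm s A * decayNorm s B := by ring
  · -- interpolation bound
    calc decayNorm s AB
        ≤ C' * (decayNorm s A * decayNorm s₀ B + decayNorm s₀ A * decayNorm s B) := P4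
      _ = C' * (decayNorm s A * decayNorm s₀ B) + C' * (decayNorm s₀ A * decayNorm s B) := by
          ring
      _ ≤ 2 * max 1 C' * (decayNorm s A * decayNorm s₀ B)
            + 2 * max 1 C' * (decayNorm s₀ A * decayNorm s B) := by
          gcongr
      _ = 2 * max 1 C' * decayNorm s A * decayNorm s₀ B
            + 2 * max 1 C' * decayNorm s₀ A * decayNorm s B := by ring
end

section
/- Let b ≥ 1 be an integer, s_0 > b/2, and s ≥ s_0. For a matrix A : ℤ^b × ℤ^b → ℂ define |A|_s^2 := Σ_{i ∈ ℤ^b} ⟨i⟩^{2s} ( sup_{i_1 − i_2 = i} |A_{i_1}^{i_2}| )^2, and for a sequence h : ℤ^b → ℂ define ‖h‖_s^2 := Σ_{i ∈ ℤ^b} ⟨i⟩^{2s} |h_i|^2, where ⟨i⟩ := max(1, |i|). Then there is a constant C(s) such that for every A with |A|_s < ∞ and every h with ‖h‖_s < ∞, the sequence (Ah)_{i_1} := Σ_{i_2} A_{i_1}^{i_2} h_{i_2} is well defined and satisfies ‖Ah‖_s ≤ C(s) ( |A|_{s_0} ‖h‖_s + |A|_s ‖h‖_{s_0} ). -/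
open scoped ENNReal

/-- The Sobolev norm of a sequence: `‖h‖_s² := Σ_{i ∈ ℤ^b} ⟨i⟩^{2s} |h_i|²`. -/
noncomputable def seqNorm {b : ℕ} (s : ℝ) (h : (Fin b → ℤ) → ℂ) : ℝ≥0∞ :=
  (∑' i : Fin b → ℤ, weightE i ^ (2 * s) * (‖h i‖₊ : ℝ≥0∞) ^ (2 : ℝ)) ^ ((1 : ℝ) / 2)

open scoped NNReal

namespace TameAux

variable {b : ℕ}

/-- The sup of the `(i₁, i₂)` entries of `A` along the diagonal `i₁ - i₂ = i`. -/
noncomputable def supA {b : ℕ} (A : (Fin b → ℤ) → (Fin b → ℤ) → ℂ)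
    (i : Fin b → ℤ) : ℝ≥0∞ :=
  ⨆ p : {q : (Fin b → ℤ) × (Fin b → ℤ) // q.1 - q.2 = i},
    (‖A p.val.1 p.val.2‖₊ : ℝ≥0∞)

lemma decayNorm_eq (t : ℝ) (A : (Fin b → ℤ) → (Fin b → ℤ) → ℂ) :
    decayNorm t A = (∑' i : Fin b → ℤ, weightE i ^ (2 * t) * supA A i ^ (2:ℝ)) ^ ((1:ℝ)/2) :=
  rfl

lemma le_supA (A : (Fin b → ℤ) → (Fin b → ℤ) → ℂ) (i₁ i₂ : Fin b → ℤ) :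
    (‖A i₁ i₂‖₊ : ℝ≥0∞) ≤ supA A (i₁ - i₂) :=
  le_iSup (fun p : {q : (Fin b → ℤ) × (Fin b → ℤ) // q.1 - q.2 = i₁ - i₂} =>
    (‖A p.val.1 p.val.2‖₊ : ℝ≥0∞)) ⟨(i₁, i₂), rfl⟩




lemma one_le_weightE (i : Fin b → ℤ) : 1 ≤ weightE i := by
  rw [weightE]
  exact ENNReal.one_le_ofReal.mpr (le_max_left _ _)

lemma weightE_ne_top (i : Fin b → ℤ) : weightE i ≠ ⊤ := ENNReal.ofReal_ne_top

lemma weightE_ne_zero (i : Fin b → ℤ) : weightE i ≠ 0 :=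
  fun h => by simpa [h] using one_le_weightE i

lemma sqrt_eq_norm (u : Fin b → ℤ) :
    Real.sqrt (∑ j, ((u j : ℝ)) ^ 2)
      = ‖(WithLp.toLp 2 (fun j => (u j : ℝ)) : EuclideanSpace ℝ (Fin b))‖ := by
  rw [EuclideanSpace.norm_eq]
  simp [Real.norm_eq_abs, sq_abs]

lemma weightE_triangle (u v : Fin b → ℤ) :
    weightE (u + v) ≤ weightE u + weightE v := by
  rw [weightE, weightE, weightE,
    ← ENNReal.ofReal_add (le_trans zero_le_one (le_max_left _ _))
      (le_trans zero_le_one (le_max_left _ _))]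
  apply ENNReal.ofReal_le_ofReal
  rw [max_le_iff]
  constructor
  · have h1 : (1:ℝ) ≤ max 1 (Real.sqrt (∑ j, ((u j : ℝ)) ^ 2)) := le_max_left _ _
    have h2 : (0:ℝ) ≤ max 1 (Real.sqrt (∑ j, ((v j : ℝ)) ^ 2)) :=
      le_trans zero_le_one (le_max_left _ _)
    linarith
  · have h1 : Real.sqrt (∑ j, (((u + v) j : ℝ)) ^ 2)
        ≤ Real.sqrt (∑ j, ((u j : ℝ)) ^ 2) + Real.sqrt (∑ j, ((v j : ℝ)) ^ 2) := by
      rw [sqrt_eq_norm, sqrt_eq_norm, sqrt_eq_norm]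
      have : (WithLp.toLp 2 (fun j => ((u + v) j : ℝ)) : EuclideanSpace ℝ (Fin b))
          = (WithLp.toLp 2 (fun j => (u j : ℝ)) : EuclideanSpace ℝ (Fin b))
            + (WithLp.toLp 2 (fun j => (v j : ℝ)) : EuclideanSpace ℝ (Fin b)) := by
        ext j
        simp
      rw [this]
      exact norm_add_le _ _
    have h2 : Real.sqrt (∑ j, ((u j : ℝ)) ^ 2) ≤ max 1 (Real.sqrt (∑ j, ((u j : ℝ)) ^ 2)) :=
      le_max_right _ _
    have h3 : Real.sqrt (∑ j, ((v j : ℝ)) ^ 2) ≤ max 1 (Real.sqrt (∑ j, ((v j : ℝ)) ^ 2)) :=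
      le_max_right _ _
    linarith

lemma peetre {t : ℝ} (ht : 0 ≤ t) (u v : Fin b → ℤ) :
    weightE (u + v) ^ t ≤ 2 ^ t * (weightE u ^ t + weightE v ^ t) := by
  rcases le_total (weightE u) (weightE v) with hc | hc
  · have h1 : weightE (u + v) ≤ 2 * weightE v := by
      refine le_trans (weightE_triangle u v) ?_
      rw [two_mul]; exact add_le_add_left hc _
    calc weightE (u + v) ^ t ≤ (2 * weightE v) ^ t := ENNReal.rpow_le_rpow h1 ht
      _ = 2 ^ t * weightE v ^ t := ENNReal.mul_rpow_of_nonneg _ _ ht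
      _ ≤ 2 ^ t * (weightE u ^ t + weightE v ^ t) := by
          exact mul_le_mul_right le_add_self _
  · have h1 : weightE (u + v) ≤ 2 * weightE u := by
      refine le_trans (weightE_triangle u v) ?_
      rw [two_mul]; exact add_le_add_right hc _
    calc weightE (u + v) ^ t ≤ (2 * weightE u) ^ t := ENNReal.rpow_le_rpow h1 ht
      _ = 2 ^ t * weightE u ^ t := ENNReal.mul_rpow_of_nonneg _ _ ht
      _ ≤ 2 ^ t * (weightE u ^ t + weightE v ^ t) := by
          exact mul_le_mul_right le_self_add _

lemma sq_add_le (x y : ℝ≥0∞) :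
    (x + y) ^ (2:ℝ) ≤ 2 ^ (2:ℝ) * (x ^ (2:ℝ) + y ^ (2:ℝ)) := by
  rcases le_total x y with hc | hc
  · calc (x + y) ^ (2:ℝ) ≤ (2 * y) ^ (2:ℝ) := by
          apply ENNReal.rpow_le_rpow _ (by norm_num)
          rw [two_mul]; exact add_le_add_left hc _
      _ = 2 ^ (2:ℝ) * y ^ (2:ℝ) := ENNReal.mul_rpow_of_nonneg _ _ (by norm_num)
      _ ≤ _ := mul_le_mul_right le_add_self _
  · calc (x + y) ^ (2:ℝ) ≤ (2 * x) ^ (2:ℝ) := by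
          apply ENNReal.rpow_le_rpow _ (by norm_num)
          rw [two_mul]; exact add_le_add_right hc _
      _ = 2 ^ (2:ℝ) * x ^ (2:ℝ) := ENNReal.mul_rpow_of_nonneg _ _ (by norm_num)
      _ ≤ _ := mul_le_mul_right le_self_add _

lemma half_sq (x : ℝ≥0∞) : (x ^ ((1:ℝ)/2)) ^ (2:ℝ) = x := by
  rw [← ENNReal.rpow_mul]
  norm_num

lemma sq_half (x : ℝ≥0∞) : (x ^ (2:ℝ)) ^ ((1:ℝ)/2) = x := by
  rw [← ENNReal.rpow_mul]
  norm_num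

lemma cs (f g : (Fin b → ℤ) → ℝ≥0∞) :
    ∑' i, f i * g i
      ≤ (∑' i, f i ^ (2:ℝ)) ^ ((1:ℝ)/2) * (∑' i, g i ^ (2:ℝ)) ^ ((1:ℝ)/2) := by
  have hconj : Real.HolderConjugate 2 2 := Real.HolderConjugate.two_two
  have := ENNReal.lintegral_mul_le_Lp_mul_Lq
    (MeasureTheory.Measure.count : MeasureTheory.Measure (Fin b → ℤ)) hconj
    (measurable_of_countable f).aemeasurable (measurable_of_countable g).aemeasurable
  simpa [MeasureTheory.lintegral_count] using this

lemma tsum_sub_left (i : Fin b → ℤ) (F : (Fin b → ℤ) → ℝ≥0∞) :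
    ∑' v, F (i - v) = ∑' v, F v :=
  (Equiv.subLeft i).tsum_eq F

lemma tsum_sub_right (v : Fin b → ℤ) (F : (Fin b → ℤ) → ℝ≥0∞) :
    ∑' i, F (i - v) = ∑' i, F i :=
  (Equiv.subRight v).tsum_eq F

lemma conv_comm (F G : (Fin b → ℤ) → ℝ≥0∞) (i : Fin b → ℤ) :
    ∑' v, F (i - v) * G v = ∑' v, G (i - v) * F v := by
  rw [← (Equiv.subLeft i).tsum_eq (fun v => G (i - v) * F v)]
  apply tsum_congr
  intro u
  simp [Equiv.subLeft, mul_comm]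

/-- discrete Young inequality `‖F ⋆ G‖₂² ≤ ‖F‖₁² ‖G‖₂²` in `ℝ≥0∞`. -/
lemma young (F G : (Fin b → ℤ) → ℝ≥0∞) :
    ∑' i, (∑' v, F (i - v) * G v) ^ (2:ℝ)
      ≤ (∑' v, F v) ^ (2:ℝ) * ∑' v, G v ^ (2:ℝ) := by
  have key : ∀ i, (∑' v, F (i - v) * G v) ^ (2:ℝ)
      ≤ (∑' v, F v) * ∑' v, F (i - v) * G v ^ (2:ℝ) := by
    intro i
    have hcs := cs (fun v => F (i - v) ^ ((1:ℝ)/2)) (fun v => F (i - v) ^ ((1:ℝ)/2) * G v)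
    have hL : (∑' v, F (i - v) ^ ((1:ℝ)/2) * (F (i - v) ^ ((1:ℝ)/2) * G v))
        = ∑' v, F (i - v) * G v := by
      apply tsum_congr; intro v
      rw [← mul_assoc, ← ENNReal.rpow_add_of_nonneg _ _ (by norm_num) (by norm_num)]
      norm_num
    have hR1 : (∑' v, (F (i - v) ^ ((1:ℝ)/2)) ^ (2:ℝ)) = ∑' v, F v := by
      rw [tsum_congr (fun v => half_sq (F (i - v)))]
      exact tsum_sub_left i F
    have hR2 : (∑' v, (F (i - v) ^ ((1:ℝ)/2) * G v) ^ (2:ℝ))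
        = ∑' v, F (i - v) * G v ^ (2:ℝ) := by
      apply tsum_congr; intro v
      rw [ENNReal.mul_rpow_of_nonneg _ _ (by norm_num : (0:ℝ) ≤ 2), half_sq]
    rw [hL, hR1, hR2] at hcs
    calc (∑' v, F (i - v) * G v) ^ (2:ℝ)
        ≤ ((∑' v, F v) ^ ((1:ℝ)/2) * (∑' v, F (i - v) * G v ^ (2:ℝ)) ^ ((1:ℝ)/2)) ^ (2:ℝ) :=
          ENNReal.rpow_le_rpow hcs (by norm_num)
      _ = (∑' v, F v) * ∑' v, F (i - v) * G v ^ (2:ℝ) := by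
          rw [ENNReal.mul_rpow_of_nonneg _ _ (by norm_num : (0:ℝ) ≤ 2), half_sq, half_sq]
  calc ∑' i, (∑' v, F (i - v) * G v) ^ (2:ℝ)
      ≤ ∑' i, (∑' v, F v) * ∑' v, F (i - v) * G v ^ (2:ℝ) := ENNReal.tsum_le_tsum key
    _ = (∑' v, F v) * ∑' i, ∑' v, F (i - v) * G v ^ (2:ℝ) := ENNReal.tsum_mul_left
    _ = (∑' v, F v) * ∑' v, ∑' i, F (i - v) * G v ^ (2:ℝ) := by rw [ENNReal.tsum_comm]
    _ = (∑' v, F v) * ∑' v, (∑' i, F (i - v)) * G v ^ (2:ℝ) := by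
        congr 1; exact tsum_congr fun v => ENNReal.tsum_mul_right
    _ = (∑' v, F v) * ∑' v, (∑' u, F u) * G v ^ (2:ℝ) := by
        congr 1; exact tsum_congr fun v => by rw [tsum_sub_right v F]
    _ = (∑' v, F v) * ((∑' u, F u) * ∑' v, G v ^ (2:ℝ)) := by rw [ENNReal.tsum_mul_left]
    _ = (∑' v, F v) ^ (2:ℝ) * ∑' v, G v ^ (2:ℝ) := by
        rw [show ((2:ℝ)) = ((2:ℕ):ℝ) by norm_num, ENNReal.rpow_natCast, sq, ← mul_assoc]

/-- Cauchy–Schwarz with the weight: an `ℓ¹` norm is bounded by a weighted `ℓ²` norm. -/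
lemma l1_le (σ : ℝ) (F : (Fin b → ℤ) → ℝ≥0∞) :
    ∑' v, F v ≤ (∑' v : Fin b → ℤ, weightE v ^ (-(2*σ))) ^ ((1:ℝ)/2)
      * (∑' v, weightE v ^ (2*σ) * F v ^ (2:ℝ)) ^ ((1:ℝ)/2) := by
  have hcs := cs (fun v => weightE v ^ (-σ)) (fun v => weightE v ^ σ * F v)
  have hL : (∑' v, weightE v ^ (-σ) * (weightE v ^ σ * F v)) = ∑' v, F v := by
    apply tsum_congr; intro v
    rw [← mul_assoc, ← ENNReal.rpow_add _ _ (weightE_ne_zero v) (weightE_ne_top v)]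
    simp
  have hR1 : (∑' v : Fin b → ℤ, (weightE v ^ (-σ)) ^ (2:ℝ)) = ∑' v : Fin b → ℤ, weightE v ^ (-(2*σ)) := by
    apply tsum_congr; intro v
    rw [← ENNReal.rpow_mul]
    ring_nf
  have hR2 : (∑' v, (weightE v ^ σ * F v) ^ (2:ℝ))
      = ∑' v, weightE v ^ (2*σ) * F v ^ (2:ℝ) := by
    apply tsum_congr; intro v
    rw [ENNReal.mul_rpow_of_nonneg _ _ (by norm_num : (0:ℝ) ≤ 2), ← ENNReal.rpow_mul]
    ring_nf
  rw [hL, hR1, hR2] at hcs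
  exact hcs




lemma tsum_pi_prod (g : ℤ → ℝ≥0∞) :
    ∀ n : ℕ, ∑' x : Fin n → ℤ, ∏ j, g (x j) = (∑' m : ℤ, g m) ^ n := by
  intro n
  induction n with
  | zero =>
      rw [tsum_eq_single (fun _ => (0:ℤ)) (fun x hx => absurd (Subsingleton.elim x _) hx)]
      simp
  | succ n ih =>
      let e : ℤ × (Fin n → ℤ) ≃ (Fin (n+1) → ℤ) :=
        Fin.consEquiv (fun _ : Fin (n+1) => ℤ)
      rw [← e.tsum_eq (fun x => ∏ j, g (x j))]
      have : ∀ p : ℤ × (Fin n → ℤ),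
          (∏ j, g ((e p) j)) = g p.1 * ∏ j : Fin n, g (p.2 j) := by
        intro p
        have he : (e p) = Fin.cons p.1 p.2 := rfl
        rw [he, Fin.prod_univ_succ, Fin.cons_zero]
        simp
      calc ∑' p : ℤ × (Fin n → ℤ), ∏ j, g ((e p) j)
          = ∑' p : ℤ × (Fin n → ℤ), g p.1 * ∏ j : Fin n, g (p.2 j) := tsum_congr this
        _ = ∑' m : ℤ, ∑' y : Fin n → ℤ, g m * ∏ j : Fin n, g (y j) := ENNReal.tsum_prod'
        _ = ∑' m : ℤ, g m * ∑' y : Fin n → ℤ, ∏ j : Fin n, g (y j) :=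
            tsum_congr fun m => ENNReal.tsum_mul_left
        _ = (∑' m : ℤ, g m) * ((∑' m : ℤ, g m) ^ n) := by
            rw [ih, ENNReal.tsum_mul_right]
        _ = (∑' m : ℤ, g m) ^ (n + 1) := by ring

lemma one_dim_ne_top {p : ℝ} (hp : 1 < p) :
    ∑' m : ℤ, (ENNReal.ofReal (max 1 |(m:ℝ)|)) ^ (-p) ≠ ⊤ := by
  have hsum : Summable fun m : ℤ => |(m:ℝ)| ^ (-p) := Real.summable_abs_int_rpow hp
  have hbound : ∀ m : ℤ, (ENNReal.ofReal (max 1 |(m:ℝ)|)) ^ (-p)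
      ≤ (if m = 0 then 1 else 0) + ENNReal.ofReal (|(m:ℝ)| ^ (-p)) := by
    intro m
    rcases eq_or_ne m 0 with rfl | hm
    · simp only [if_pos rfl]
      calc (ENNReal.ofReal (max 1 |((0:ℤ):ℝ)|)) ^ (-p) ≤ 1 := by
            norm_num
        _ ≤ _ := le_self_add
    · have h1 : (1:ℝ) ≤ |(m:ℝ)| := by
        rw [← Int.cast_abs]
        exact_mod_cast Int.one_le_abs (by exact_mod_cast hm)
      rw [if_neg hm, max_eq_right h1, ← ENNReal.ofReal_rpow_of_pos (by linarith)]
      exact le_add_self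
  refine ne_top_of_le_ne_top ?_ (ENNReal.tsum_le_tsum hbound)
  rw [ENNReal.tsum_add]
  apply ENNReal.add_ne_top.mpr
  constructor
  · rw [tsum_eq_single (0:ℤ) (fun m hm => if_neg hm)]
    simp
  · rw [← ENNReal.ofReal_tsum_of_nonneg (fun m => Real.rpow_nonneg (abs_nonneg _) _) hsum]
    exact ENNReal.ofReal_ne_top

lemma weightE_ge (i : Fin (b':ℕ) → ℤ) (j : Fin b') :
    ENNReal.ofReal (max 1 |((i j : ℤ):ℝ)|) ≤ weightE i := by
  apply ENNReal.ofReal_le_ofReal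
  apply max_le_max le_rfl
  rw [show |((i j : ℤ):ℝ)| = Real.sqrt (((i j : ℤ):ℝ) ^ 2) by rw [Real.sqrt_sq_eq_abs]]
  apply Real.sqrt_le_sqrt
  exact Finset.single_le_sum (f := fun j => ((i j : ℤ):ℝ) ^ 2)
    (fun j _ => sq_nonneg _) (Finset.mem_univ j)

lemma S_ne_top {b : ℕ} (hb : 1 ≤ b) {σ : ℝ} (hσ : (b:ℝ)/2 < σ) :
    ∑' i : Fin b → ℤ, weightE i ^ (-(2*σ)) ≠ ⊤ := by
  set p : ℝ := 2 * σ / b with hp_def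
  have hbpos : (0:ℝ) < b := by exact_mod_cast hb
  have hp : 1 < p := by
    rw [hp_def, lt_div_iff₀ hbpos]
    linarith
  have hbp : (b:ℝ) * p = 2 * σ := by
    rw [hp_def]; field_simp
  have key : ∀ i : Fin b → ℤ,
      weightE i ^ (-(2*σ)) ≤ ∏ j, (ENNReal.ofReal (max 1 |((i j : ℤ):ℝ)|)) ^ (-p) := by
    intro i
    have h1 : ∏ j, (ENNReal.ofReal (max 1 |((i j : ℤ):ℝ)|)) ≤ weightE i ^ (b:ℕ) := by
      calc ∏ j, (ENNReal.ofReal (max 1 |((i j : ℤ):ℝ)|))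
          ≤ ∏ _j : Fin b, weightE i := Finset.prod_le_prod' fun j _ => weightE_ge i j
        _ = weightE i ^ (b:ℕ) := by rw [Finset.prod_const, Finset.card_univ, Fintype.card_fin]
    have h2 : weightE i ^ (-(2*σ)) = (weightE i ^ ((b:ℕ):ℝ)) ^ (-p) := by
      rw [← ENNReal.rpow_mul]
      congr 1
      push_cast
      rw [← hbp]; ring
    rw [h2, ENNReal.rpow_natCast _ b] at *
    calc (weightE i ^ b) ^ (-p) ≤ (∏ j, (ENNReal.ofReal (max 1 |((i j : ℤ):ℝ)|))) ^ (-p) := by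
          rw [ENNReal.rpow_neg, ENNReal.rpow_neg]
          exact ENNReal.inv_le_inv.mpr (ENNReal.rpow_le_rpow h1 (le_of_lt (by linarith)))
      _ = ∏ j, (ENNReal.ofReal (max 1 |((i j : ℤ):ℝ)|)) ^ (-p) :=
          (ENNReal.prod_rpow_of_ne_top (fun j _ => ENNReal.ofReal_ne_top) (-p)).symm
  have hle : ∑' i : Fin b → ℤ, weightE i ^ (-(2*σ))
      ≤ (∑' m : ℤ, (ENNReal.ofReal (max 1 |(m:ℝ)|)) ^ (-p)) ^ b := by
    refine le_trans (ENNReal.tsum_le_tsum key) (le_of_eq ?_)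
    exact tsum_pi_prod (fun m => (ENNReal.ofReal (max 1 |(m:ℝ)|)) ^ (-p)) b
  exact ne_top_of_le_ne_top (ENNReal.pow_ne_top (one_dim_ne_top hp)) hle

end TameAux

open TameAux in
/-- The `s`-decay norm of a matrix controls its action on the Sobolev sequence
spaces in a tame way:
`‖Ah‖_s ≤ C(s) (|A|_{s₀} ‖h‖_s + |A|_s ‖h‖_{s₀})`. -/
theorem decayNorm_tame_action (b : ℕ) (hb : 1 ≤ b) (s₀ s : ℝ)
    (hs₀ : (b : ℝ) / 2 < s₀) (hs : s₀ ≤ s) :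
    ∃ C : ℝ≥0∞, C ≠ ⊤ ∧
      ∀ (A : (Fin b → ℤ) → (Fin b → ℤ) → ℂ) (h : (Fin b → ℤ) → ℂ),
        decayNorm s A ≠ ⊤ → seqNorm s h ≠ ⊤ →
        (∀ i₁ : Fin b → ℤ, Summable fun i₂ => ‖A i₁ i₂‖ * ‖h i₂‖) ∧
        seqNorm s (fun i₁ => ∑' i₂, A i₁ i₂ * h i₂)
          ≤ C * (decayNorm s₀ A * seqNorm s h + decayNorm s A * seqNorm s₀ h) := by
  classical
  have hbpos : (0:ℝ) < b := by exact_mod_cast hb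
  have hs₀pos : 0 < s₀ := lt_trans (by positivity) hs₀
  have hspos : 0 < s := lt_of_lt_of_le hs₀pos hs
  set S : ℝ≥0∞ := ∑' i : Fin b → ℤ, weightE i ^ (-(2*s₀)) with hS_def
  have hS : S ≠ ⊤ := S_ne_top hb hs₀
  set K : ℝ≥0∞ := 2 ^ (2*s) * 2 ^ (3:ℝ) * S with hK_def
  have hK : K ≠ ⊤ := by
    apply ENNReal.mul_ne_top (ENNReal.mul_ne_top ?_ ?_) hS
    · exact (ENNReal.rpow_lt_top_of_nonneg (by positivity) ENNReal.ofNat_ne_top).ne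
    · exact (ENNReal.rpow_lt_top_of_nonneg (by norm_num) ENNReal.ofNat_ne_top).ne
  refine ⟨K ^ ((1:ℝ)/2), (ENNReal.rpow_lt_top_of_nonneg (by norm_num) hK).ne, ?_⟩
  intro A h hA hh
  set a : (Fin b → ℤ) → ℝ≥0∞ := supA A with ha_def
  set H : (Fin b → ℤ) → ℝ≥0∞ := fun i => (‖h i‖₊ : ℝ≥0∞) with hH_def
  have hDAsq : ∀ t : ℝ,
      (∑' i : Fin b → ℤ, weightE i ^ (2*t) * a i ^ (2:ℝ)) = (decayNorm t A) ^ (2:ℝ) := by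
    intro t
    rw [decayNorm_eq t A, half_sq]
  have hHsq : ∀ t : ℝ,
      (∑' i : Fin b → ℤ, weightE i ^ (2*t) * H i ^ (2:ℝ)) = (seqNorm t h) ^ (2:ℝ) := by
    intro t
    rw [seqNorm, half_sq]
  have hone : ∀ (t : ℝ), 0 ≤ t → ∀ i : Fin b → ℤ, (1:ℝ≥0∞) ≤ weightE i ^ t := by
    intro t ht i
    calc (1:ℝ≥0∞) = 1 ^ t := (ENNReal.one_rpow t).symm
      _ ≤ weightE i ^ t := ENNReal.rpow_le_rpow (one_le_weightE i) ht
  -- ℓ² bounds for `a` and `H`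
  have ha2 : (∑' v : Fin b → ℤ, a v ^ (2:ℝ)) ≤ (decayNorm s A) ^ (2:ℝ) := by
    rw [← hDAsq s]
    refine ENNReal.tsum_le_tsum fun v => ?_
    exact le_mul_of_one_le_left zero_le (hone (2*s) (by positivity) v)
  have hH2 : (∑' v : Fin b → ℤ, H v ^ (2:ℝ)) ≤ (seqNorm s h) ^ (2:ℝ) := by
    rw [← hHsq s]
    refine ENNReal.tsum_le_tsum fun v => ?_
    exact le_mul_of_one_le_left zero_le (hone (2*s) (by positivity) v)
  -- the convolution bound for each row
  have hconv : ∀ i₁ : Fin b → ℤ,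
      (∑' i₂ : Fin b → ℤ, a (i₁ - i₂) * H i₂) ≤ decayNorm s A * seqNorm s h := by
    intro i₁
    calc ∑' i₂ : Fin b → ℤ, a (i₁ - i₂) * H i₂
        ≤ (∑' i₂ : Fin b → ℤ, a (i₁ - i₂) ^ (2:ℝ)) ^ ((1:ℝ)/2)
            * (∑' i₂ : Fin b → ℤ, H i₂ ^ (2:ℝ)) ^ ((1:ℝ)/2) :=
          cs (fun i₂ => a (i₁ - i₂)) H
      _ = (∑' v : Fin b → ℤ, a v ^ (2:ℝ)) ^ ((1:ℝ)/2)
            * (∑' i₂ : Fin b → ℤ, H i₂ ^ (2:ℝ)) ^ ((1:ℝ)/2) := by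
          rw [tsum_sub_left i₁ (fun v => a v ^ (2:ℝ))]
      _ ≤ ((decayNorm s A) ^ (2:ℝ)) ^ ((1:ℝ)/2) * ((seqNorm s h) ^ (2:ℝ)) ^ ((1:ℝ)/2) :=
          mul_le_mul' (ENNReal.rpow_le_rpow ha2 (by norm_num))
            (ENNReal.rpow_le_rpow hH2 (by norm_num))
      _ = decayNorm s A * seqNorm s h := by rw [sq_half, sq_half]
  -- summability of each row
  have hrow_fin : ∀ i₁ : Fin b → ℤ,
      (∑' i₂ : Fin b → ℤ, ((‖A i₁ i₂‖₊ * ‖h i₂‖₊ : ℝ≥0) : ℝ≥0∞)) ≠ ⊤ := by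
    intro i₁
    have hle : (∑' i₂ : Fin b → ℤ, ((‖A i₁ i₂‖₊ * ‖h i₂‖₊ : ℝ≥0) : ℝ≥0∞))
        ≤ decayNorm s A * seqNorm s h := by
      refine le_trans (ENNReal.tsum_le_tsum fun i₂ => ?_) (hconv i₁)
      rw [ENNReal.coe_mul]
      exact mul_le_mul' (le_supA A i₁ i₂) le_rfl
    exact ne_top_of_le_ne_top (ENNReal.mul_ne_top hA hh) hle
  have hrow_summable : ∀ i₁ : Fin b → ℤ, Summable fun i₂ => ‖A i₁ i₂‖₊ * ‖h i₂‖₊ :=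
    fun i₁ => ENNReal.tsum_coe_ne_top_iff_summable.mp (hrow_fin i₁)
  have part_a : ∀ i₁ : Fin b → ℤ, Summable fun i₂ => ‖A i₁ i₂‖ * ‖h i₂‖ := by
    intro i₁
    have := NNReal.summable_coe.mpr (hrow_summable i₁)
    refine this.congr fun i₂ => ?_
    simp [NNReal.coe_mul]
  refine ⟨part_a, ?_⟩
  -- the pointwise bound on the rows of `A h`
  have hAh : ∀ i₁ : Fin b → ℤ,
      (‖∑' i₂, A i₁ i₂ * h i₂‖₊ : ℝ≥0∞) ≤ ∑' i₂ : Fin b → ℤ, a (i₁ - i₂) * H i₂ := by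
    intro i₁
    have hsum2 : Summable fun i₂ => ‖A i₁ i₂ * h i₂‖₊ := by
      refine (hrow_summable i₁).congr fun i₂ => ?_
      rw [nnnorm_mul]
    calc (‖∑' i₂, A i₁ i₂ * h i₂‖₊ : ℝ≥0∞)
        ≤ ((∑' i₂, ‖A i₁ i₂ * h i₂‖₊ : ℝ≥0) : ℝ≥0∞) :=
          ENNReal.coe_le_coe.mpr (nnnorm_tsum_le hsum2)
      _ = ∑' i₂ : Fin b → ℤ, ((‖A i₁ i₂ * h i₂‖₊ : ℝ≥0) : ℝ≥0∞) := ENNReal.coe_tsum hsum2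
      _ ≤ ∑' i₂ : Fin b → ℤ, a (i₁ - i₂) * H i₂ := by
          refine ENNReal.tsum_le_tsum fun i₂ => ?_
          rw [nnnorm_mul, ENNReal.coe_mul]
          exact mul_le_mul' (le_supA A i₁ i₂) le_rfl
  -- the two pieces of the splitting
  set F₁ : (Fin b → ℤ) → ℝ≥0∞ := fun v => weightE v ^ s * a v with hF₁_def
  set Hs : (Fin b → ℤ) → ℝ≥0∞ := fun v => weightE v ^ s * H v with hHs_def
  -- pointwise Peetre splitting
  have hsplit : ∀ i : Fin b → ℤ,
      weightE i ^ (2*s) * (∑' v : Fin b → ℤ, a (i - v) * H v) ^ (2:ℝ)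
        ≤ 2 ^ (2*s) * 2 ^ (2:ℝ) *
          ((∑' v : Fin b → ℤ, F₁ (i - v) * H v) ^ (2:ℝ)
            + (∑' v : Fin b → ℤ, a (i - v) * Hs v) ^ (2:ℝ)) := by
    intro i
    have e1 : weightE i ^ (2*s) * (∑' v : Fin b → ℤ, a (i - v) * H v) ^ (2:ℝ)
        = (weightE i ^ s * ∑' v : Fin b → ℤ, a (i - v) * H v) ^ (2:ℝ) := by
      rw [ENNReal.mul_rpow_of_nonneg _ _ (by norm_num : (0:ℝ) ≤ 2), ← ENNReal.rpow_mul]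
      ring_nf
    have e3 : weightE i ^ s * (∑' v : Fin b → ℤ, a (i - v) * H v)
        ≤ 2 ^ s * ((∑' v : Fin b → ℤ, F₁ (i - v) * H v)
            + ∑' v : Fin b → ℤ, a (i - v) * Hs v) := by
      rw [← ENNReal.tsum_mul_left]
      calc ∑' v : Fin b → ℤ, weightE i ^ s * (a (i - v) * H v)
          ≤ ∑' v : Fin b → ℤ, 2 ^ s * (weightE (i - v) ^ s + weightE v ^ s)
              * (a (i - v) * H v) := by
            refine ENNReal.tsum_le_tsum fun v => ?_
            have hp : weightE i ^ s ≤ 2 ^ s * (weightE (i - v) ^ s + weightE v ^ s) := by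
              have := peetre (le_of_lt hspos) (i - v) v
              rwa [sub_add_cancel] at this
            exact mul_le_mul' hp le_rfl
        _ = ∑' v : Fin b → ℤ, 2 ^ s * (F₁ (i - v) * H v + a (i - v) * Hs v) := by
            refine tsum_congr fun v => ?_
            simp only [hF₁_def, hHs_def]
            ring
        _ = 2 ^ s * ((∑' v : Fin b → ℤ, F₁ (i - v) * H v)
              + ∑' v : Fin b → ℤ, a (i - v) * Hs v) := by
            rw [ENNReal.tsum_mul_left, ENNReal.tsum_add]
    calc weightE i ^ (2*s) * (∑' v : Fin b → ℤ, a (i - v) * H v) ^ (2:ℝ)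
        = (weightE i ^ s * ∑' v : Fin b → ℤ, a (i - v) * H v) ^ (2:ℝ) := e1
      _ ≤ (2 ^ s * ((∑' v : Fin b → ℤ, F₁ (i - v) * H v)
            + ∑' v : Fin b → ℤ, a (i - v) * Hs v)) ^ (2:ℝ) :=
          ENNReal.rpow_le_rpow e3 (by norm_num)
      _ = (2:ℝ≥0∞) ^ (2*s) * ((∑' v : Fin b → ℤ, F₁ (i - v) * H v)
            + ∑' v : Fin b → ℤ, a (i - v) * Hs v) ^ (2:ℝ) := by
          rw [ENNReal.mul_rpow_of_nonneg _ _ (by norm_num : (0:ℝ) ≤ 2), ← ENNReal.rpow_mul]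
          ring_nf
      _ ≤ (2:ℝ≥0∞) ^ (2*s) * (2 ^ (2:ℝ) *
            ((∑' v : Fin b → ℤ, F₁ (i - v) * H v) ^ (2:ℝ)
              + (∑' v : Fin b → ℤ, a (i - v) * Hs v) ^ (2:ℝ))) :=
          mul_le_mul' le_rfl (sq_add_le _ _)
      _ = 2 ^ (2*s) * 2 ^ (2:ℝ) *
            ((∑' v : Fin b → ℤ, F₁ (i - v) * H v) ^ (2:ℝ)
              + (∑' v : Fin b → ℤ, a (i - v) * Hs v) ^ (2:ℝ)) := by ring
  -- ℓ¹ bounds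
  have hl1H : (∑' v : Fin b → ℤ, H v) ≤ S ^ ((1:ℝ)/2) * seqNorm s₀ h := by
    have := l1_le s₀ H
    rwa [hHsq s₀, sq_half, ← hS_def] at this
  have hl1a : (∑' v : Fin b → ℤ, a v) ≤ S ^ ((1:ℝ)/2) * decayNorm s₀ A := by
    have := l1_le s₀ a
    rwa [hDAsq s₀, sq_half, ← hS_def] at this
  -- ℓ² norm of F₁ and Hs
  have hF₁2 : (∑' v : Fin b → ℤ, F₁ v ^ (2:ℝ)) = (decayNorm s A) ^ (2:ℝ) := by
    rw [← hDAsq s]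
    refine tsum_congr fun v => ?_
    simp only [hF₁_def]
    rw [ENNReal.mul_rpow_of_nonneg _ _ (by norm_num : (0:ℝ) ≤ 2), ← ENNReal.rpow_mul]
    ring_nf
  have hHs2 : (∑' v : Fin b → ℤ, Hs v ^ (2:ℝ)) = (seqNorm s h) ^ (2:ℝ) := by
    rw [← hHsq s]
    refine tsum_congr fun v => ?_
    simp only [hHs_def]
    rw [ENNReal.mul_rpow_of_nonneg _ _ (by norm_num : (0:ℝ) ≤ 2), ← ENNReal.rpow_mul]
    ring_nf
  -- Young bounds for the two pieces
  have hT1 : (∑' i : Fin b → ℤ, (∑' v : Fin b → ℤ, F₁ (i - v) * H v) ^ (2:ℝ))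
      ≤ S * ((seqNorm s₀ h) ^ (2:ℝ) * (decayNorm s A) ^ (2:ℝ)) := by
    calc ∑' i : Fin b → ℤ, (∑' v : Fin b → ℤ, F₁ (i - v) * H v) ^ (2:ℝ)
        = ∑' i : Fin b → ℤ, (∑' v : Fin b → ℤ, H (i - v) * F₁ v) ^ (2:ℝ) := by
          refine tsum_congr fun i => ?_
          rw [conv_comm F₁ H i]
      _ ≤ (∑' v : Fin b → ℤ, H v) ^ (2:ℝ) * ∑' v : Fin b → ℤ, F₁ v ^ (2:ℝ) := young H F₁
      _ ≤ (S ^ ((1:ℝ)/2) * seqNorm s₀ h) ^ (2:ℝ) * (decayNorm s A) ^ (2:ℝ) := by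
          rw [hF₁2]
          exact mul_le_mul' (ENNReal.rpow_le_rpow hl1H (by norm_num)) le_rfl
      _ = S * ((seqNorm s₀ h) ^ (2:ℝ) * (decayNorm s A) ^ (2:ℝ)) := by
          rw [ENNReal.mul_rpow_of_nonneg _ _ (by norm_num : (0:ℝ) ≤ 2), half_sq, mul_assoc]
  have hT2 : (∑' i : Fin b → ℤ, (∑' v : Fin b → ℤ, a (i - v) * Hs v) ^ (2:ℝ))
      ≤ S * ((decayNorm s₀ A) ^ (2:ℝ) * (seqNorm s h) ^ (2:ℝ)) := by
    calc ∑' i : Fin b → ℤ, (∑' v : Fin b → ℤ, a (i - v) * Hs v) ^ (2:ℝ)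
        ≤ (∑' v : Fin b → ℤ, a v) ^ (2:ℝ) * ∑' v : Fin b → ℤ, Hs v ^ (2:ℝ) := young a Hs
      _ ≤ (S ^ ((1:ℝ)/2) * decayNorm s₀ A) ^ (2:ℝ) * (seqNorm s h) ^ (2:ℝ) := by
          rw [hHs2]
          exact mul_le_mul' (ENNReal.rpow_le_rpow hl1a (by norm_num)) le_rfl
      _ = S * ((decayNorm s₀ A) ^ (2:ℝ) * (seqNorm s h) ^ (2:ℝ)) := by
          rw [ENNReal.mul_rpow_of_nonneg _ _ (by norm_num : (0:ℝ) ≤ 2), half_sq, mul_assoc]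
  -- the total sum
  set X : ℝ≥0∞ := decayNorm s₀ A * seqNorm s h + decayNorm s A * seqNorm s₀ h with hX_def
  have hTotal : (∑' i : Fin b → ℤ, weightE i ^ (2*s)
        * (∑' v : Fin b → ℤ, a (i - v) * H v) ^ (2:ℝ)) ≤ K * X ^ (2:ℝ) := by
    have hsum_le : (∑' i : Fin b → ℤ, weightE i ^ (2*s)
          * (∑' v : Fin b → ℤ, a (i - v) * H v) ^ (2:ℝ))
        ≤ 2 ^ (2*s) * 2 ^ (2:ℝ) *
          ((∑' i : Fin b → ℤ, (∑' v : Fin b → ℤ, F₁ (i - v) * H v) ^ (2:ℝ))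
            + ∑' i : Fin b → ℤ, (∑' v : Fin b → ℤ, a (i - v) * Hs v) ^ (2:ℝ)) := by
      refine le_trans (ENNReal.tsum_le_tsum hsplit) (le_of_eq ?_)
      rw [ENNReal.tsum_mul_left, ENNReal.tsum_add]
    have hXsq : S * ((seqNorm s₀ h) ^ (2:ℝ) * (decayNorm s A) ^ (2:ℝ))
          + S * ((decayNorm s₀ A) ^ (2:ℝ) * (seqNorm s h) ^ (2:ℝ))
        ≤ 2 * (S * X ^ (2:ℝ)) := by
      have h1 : (seqNorm s₀ h) ^ (2:ℝ) * (decayNorm s A) ^ (2:ℝ) ≤ X ^ (2:ℝ) := by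
        rw [← ENNReal.mul_rpow_of_nonneg _ _ (by norm_num : (0:ℝ) ≤ 2)]
        refine ENNReal.rpow_le_rpow ?_ (by norm_num)
        rw [hX_def, mul_comm]
        exact le_add_self
      have h2 : (decayNorm s₀ A) ^ (2:ℝ) * (seqNorm s h) ^ (2:ℝ) ≤ X ^ (2:ℝ) := by
        rw [← ENNReal.mul_rpow_of_nonneg _ _ (by norm_num : (0:ℝ) ≤ 2)]
        refine ENNReal.rpow_le_rpow ?_ (by norm_num)
        rw [hX_def]
        exact le_self_add
      calc S * ((seqNorm s₀ h) ^ (2:ℝ) * (decayNorm s A) ^ (2:ℝ))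
            + S * ((decayNorm s₀ A) ^ (2:ℝ) * (seqNorm s h) ^ (2:ℝ))
          ≤ S * X ^ (2:ℝ) + S * X ^ (2:ℝ) :=
            add_le_add (mul_le_mul' le_rfl h1) (mul_le_mul' le_rfl h2)
        _ = 2 * (S * X ^ (2:ℝ)) := by ring
    calc (∑' i : Fin b → ℤ, weightE i ^ (2*s)
          * (∑' v : Fin b → ℤ, a (i - v) * H v) ^ (2:ℝ))
        ≤ 2 ^ (2*s) * 2 ^ (2:ℝ) *
          ((∑' i : Fin b → ℤ, (∑' v : Fin b → ℤ, F₁ (i - v) * H v) ^ (2:ℝ))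
            + ∑' i : Fin b → ℤ, (∑' v : Fin b → ℤ, a (i - v) * Hs v) ^ (2:ℝ)) := hsum_le
      _ ≤ 2 ^ (2*s) * 2 ^ (2:ℝ) *
          (S * ((seqNorm s₀ h) ^ (2:ℝ) * (decayNorm s A) ^ (2:ℝ))
            + S * ((decayNorm s₀ A) ^ (2:ℝ) * (seqNorm s h) ^ (2:ℝ))) :=
          mul_le_mul' le_rfl (add_le_add hT1 hT2)
      _ ≤ 2 ^ (2*s) * 2 ^ (2:ℝ) * (2 * (S * X ^ (2:ℝ))) := mul_le_mul' le_rfl hXsq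
      _ = K * X ^ (2:ℝ) := by
          rw [hK_def]
          have h23 : (2:ℝ≥0∞) ^ (3:ℝ) = 2 ^ (2:ℝ) * 2 := by
            rw [show (3:ℝ) = 2 + 1 by norm_num,
              ENNReal.rpow_add _ _ (by norm_num) ENNReal.ofNat_ne_top, ENNReal.rpow_one]
          rw [h23]
          ring
  -- conclude
  have hfinal : seqNorm s (fun i₁ => ∑' i₂, A i₁ i₂ * h i₂)
      ≤ (K * X ^ (2:ℝ)) ^ ((1:ℝ)/2) := by
    rw [seqNorm]
    refine le_trans (ENNReal.rpow_le_rpow ?_ (by norm_num)) 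
      (ENNReal.rpow_le_rpow hTotal (by norm_num))
    refine ENNReal.tsum_le_tsum fun i => ?_
    exact mul_le_mul' le_rfl (ENNReal.rpow_le_rpow (hAh i) (by norm_num))
  calc seqNorm s (fun i₁ => ∑' i₂, A i₁ i₂ * h i₂)
      ≤ (K * X ^ (2:ℝ)) ^ ((1:ℝ)/2) := hfinal
    _ = K ^ ((1:ℝ)/2) * X := by
        rw [ENNReal.mul_rpow_of_nonneg _ _ (by norm_num : (0:ℝ) ≤ 1/2), sq_half]
end
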